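/- arXiv:1907.03037 — 10 statements merged into one kernel-verified Lean document; each statement's English description precedes it below -/
import Mathlib

section
/- Let G = (V,E) be a finite simple undirected graph with n = |V| ≥ 2 vertices and at least one edge, let η ≥ 0, and let f be an η-locally-stable fractional edge-load assignment on G with vertex loads ℓ_v and maximum load ρ̂ = max_{v∈V} ℓ_v. Then (1 − 3·√(η·log n / ρ̂))·ρ̂ ≤ ρ*_G ≤ ρ̂, where log denotes the natural logarithm. -/
open Finset

section Aux

variable {V : Type*} [Fintype V] [DecidableEq V]
  (G : SimpleGraph V) [DecidableRel G.Adj]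
  (f : Sym2 V → V → ℝ) (ℓ : V → ℝ)

lemma aux_loadSum
    (hℓ : ∀ v : V, ℓ v = ∑ e ∈ G.edgeFinset.filter (fun e => v ∈ e), f e v)
    (S : Finset V) :
    ∑ v ∈ S, ℓ v = ∑ e ∈ G.edgeFinset, ∑ v ∈ S.filter (fun v => v ∈ e), f e v := by
  simp_rw [hℓ, Finset.sum_filter]
  exact Finset.sum_comm

lemma aux_filter_mem (T : Finset V) (a b : V) :
    T.filter (fun v => v ∈ s(a, b)) = T ∩ {a, b} := by
  ext v
  simp [Sym2.mem_iff, Finset.mem_filter, Finset.mem_inter, Finset.mem_insert,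
    Finset.mem_singleton]

lemma aux_edge_lb
    (hf_nonneg : ∀ u v : V, G.Adj u v → 0 ≤ f s(u, v) u)
    (hf_sum : ∀ u v : V, G.Adj u v → f s(u, v) u + f s(u, v) v = 1)
    (S : Finset V) :
    ∀ e ∈ G.edgeFinset, (if e ∈ S.sym2 then (1 : ℝ) else 0) ≤
      ∑ v ∈ S.filter (fun v => v ∈ e), f e v := by
  intro e he
  induction e using Sym2.ind with
  | _ a b =>
    have hadj : G.Adj a b := by
      rwa [SimpleGraph.mem_edgeFinset, SimpleGraph.mem_edgeSet] at he
    have hne : a ≠ b := hadj.ne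
    have hfa : 0 ≤ f s(a, b) a := hf_nonneg a b hadj
    have hfb : 0 ≤ f s(a, b) b := by
      have := hf_nonneg b a hadj.symm
      rwa [Sym2.eq_swap] at this
    rw [aux_filter_mem]
    by_cases hmem : s(a, b) ∈ S.sym2
    · rw [if_pos hmem]
      obtain ⟨ha, hb⟩ := Finset.mk_mem_sym2_iff.mp hmem
      have hin : S ∩ {a, b} = {a, b} := by
        apply Finset.inter_eq_right.mpr
        intro v hv
        rcases Finset.mem_insert.mp hv with h | h
        · rwa [h]
        · rw [Finset.mem_singleton] at h; rwa [h]
      rw [hin, Finset.sum_pair hne, hf_sum a b hadj]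
    · rw [if_neg hmem]
      apply Finset.sum_nonneg
      intro v hv
      rcases Finset.mem_insert.mp (Finset.mem_of_mem_inter_right hv) with h | h
      · rw [h]; exact hfa
      · rw [Finset.mem_singleton] at h; rw [h]; exact hfb

lemma aux_edge_ub
    (hf_nonneg : ∀ u v : V, G.Adj u v → 0 ≤ f s(u, v) u)
    (hf_sum : ∀ u v : V, G.Adj u v → f s(u, v) u + f s(u, v) v = 1)
    (A B : Finset V) (hAB : A ⊆ B)
    (hcl : ∀ u v : V, G.Adj u v → u ∈ A → 0 < f s(u, v) u → v ∈ B) :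
    ∀ e ∈ G.edgeFinset, ∑ v ∈ A.filter (fun v => v ∈ e), f e v ≤
      (if e ∈ B.sym2 then (1 : ℝ) else 0) := by
  intro e he
  induction e using Sym2.ind with
  | _ a b =>
    have hadj : G.Adj a b := by
      rwa [SimpleGraph.mem_edgeFinset, SimpleGraph.mem_edgeSet] at he
    have hne : a ≠ b := hadj.ne
    have hfa : 0 ≤ f s(a, b) a := hf_nonneg a b hadj
    have hfb : 0 ≤ f s(a, b) b := by
      have := hf_nonneg b a hadj.symm
      rwa [Sym2.eq_swap] at this
    have hsum : f s(a, b) a + f s(a, b) b = 1 := hf_sum a b hadj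
    have hcla : a ∈ A → 0 < f s(a, b) a → b ∈ B := hcl a b hadj
    have hclb : b ∈ A → 0 < f s(a, b) b → a ∈ B := by
      intro hb hpos
      have := hcl b a hadj.symm hb
      rw [Sym2.eq_swap] at this
      exact this hpos
    rw [aux_filter_mem]
    by_cases ha : a ∈ A <;> by_cases hb : b ∈ A
    · -- both in A, hence in B
      have hmem : s(a, b) ∈ B.sym2 := Finset.mk_mem_sym2_iff.mpr ⟨hAB ha, hAB hb⟩
      rw [if_pos hmem]
      have hin : A ∩ {a, b} = {a, b} := by
        apply Finset.inter_eq_right.mpr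
        intro v hv
        rcases Finset.mem_insert.mp hv with h | h
        · rwa [h]
        · rw [Finset.mem_singleton] at h; rwa [h]
      rw [hin, Finset.sum_pair hne, hsum]
    · have hin : A ∩ {a, b} = {a} := by
        ext v
        simp only [Finset.mem_inter, Finset.mem_insert, Finset.mem_singleton]
        constructor
        · rintro ⟨hvA, h | h⟩
          · exact h
          · exact absurd (h ▸ hvA) hb
        · rintro rfl; exact ⟨ha, Or.inl rfl⟩
      rw [hin, Finset.sum_singleton]
      rcases lt_or_ge 0 (f s(a, b) a) with hpos | hnonpos
      · have hmem : s(a, b) ∈ B.sym2 :=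
          Finset.mk_mem_sym2_iff.mpr ⟨hAB ha, hcla ha hpos⟩
        rw [if_pos hmem]; linarith
      · split <;> linarith
    · have hin : A ∩ {a, b} = {b} := by
        ext v
        simp only [Finset.mem_inter, Finset.mem_insert, Finset.mem_singleton]
        constructor
        · rintro ⟨hvA, h | h⟩
          · exact absurd (h ▸ hvA) ha
          · exact h
        · rintro rfl; exact ⟨hb, Or.inr rfl⟩
      rw [hin, Finset.sum_singleton]
      rcases lt_or_ge 0 (f s(a, b) b) with hpos | hnonpos
      · have hmem : s(a, b) ∈ B.sym2 :=
          Finset.mk_mem_sym2_iff.mpr ⟨hclb hb hpos, hAB hb⟩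
        rw [if_pos hmem]; linarith
      · split <;> linarith
    · have hin : A ∩ {a, b} = ∅ := by
        ext v
        simp only [Finset.mem_inter, Finset.mem_insert, Finset.mem_singleton,
          Finset.notMem_empty, iff_false, not_and]
        rintro hvA (rfl | rfl)
        · exact ha hvA
        · exact hb hvA
      rw [hin, Finset.sum_empty]
      split <;> norm_num

lemma aux_density_ub
    (hf_nonneg : ∀ u v : V, G.Adj u v → 0 ≤ f s(u, v) u)
    (hf_sum : ∀ u v : V, G.Adj u v → f s(u, v) u + f s(u, v) v = 1)
    (hℓ : ∀ v : V, ℓ v = ∑ e ∈ G.edgeFinset.filter (fun e => v ∈ e), f e v)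
    (S : Finset V) :
    ((G.edgeFinset.filter (fun e => e ∈ S.sym2)).card : ℝ) ≤ ∑ v ∈ S, ℓ v := by
  rw [aux_loadSum G f ℓ hℓ S, Finset.card_filter]
  push_cast
  exact Finset.sum_le_sum (aux_edge_lb G f hf_nonneg hf_sum S)

lemma aux_density_lb
    (hf_nonneg : ∀ u v : V, G.Adj u v → 0 ≤ f s(u, v) u)
    (hf_sum : ∀ u v : V, G.Adj u v → f s(u, v) u + f s(u, v) v = 1)
    (hℓ : ∀ v : V, ℓ v = ∑ e ∈ G.edgeFinset.filter (fun e => v ∈ e), f e v)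
    (A B : Finset V) (hAB : A ⊆ B)
    (hcl : ∀ u v : V, G.Adj u v → u ∈ A → 0 < f s(u, v) u → v ∈ B) :
    ∑ v ∈ A, ℓ v ≤ ((G.edgeFinset.filter (fun e => e ∈ B.sym2)).card : ℝ) := by
  rw [aux_loadSum G f ℓ hℓ A, Finset.card_filter]
  push_cast
  exact Finset.sum_le_sum (aux_edge_ub G f hf_nonneg hf_sum A B hAB hcl)

end Aux

set_option maxHeartbeats 1000000 in
/-- Local η-stability of a fractional edge-load assignment implies
`(1 − 3√(η·log n/ρ̂))·ρ̂ ≤ ρ*_G ≤ ρ̂`, where `ρ̂` is the maximum vertex load and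
`ρ*_G` the maximum subgraph density. -/
theorem local_stability_global_approx
    {V : Type*} [Fintype V] [DecidableEq V]
    (G : SimpleGraph V) [DecidableRel G.Adj]
    (hn : 2 ≤ Fintype.card V)
    (hE : G.edgeFinset.Nonempty)
    (η : ℝ) (hη : 0 ≤ η)
    (f : Sym2 V → V → ℝ)
    (hf_nonneg : ∀ u v : V, G.Adj u v → 0 ≤ f s(u, v) u)
    (hf_sum : ∀ u v : V, G.Adj u v → f s(u, v) u + f s(u, v) v = 1)
    (ℓ : V → ℝ)
    (hℓ : ∀ v : V, ℓ v = ∑ e ∈ G.edgeFinset.filter (fun e => v ∈ e), f e v)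
    (hstab : ∀ u v : V, G.Adj u v → 0 < f s(u, v) u → ℓ u ≤ ℓ v + η)
    (ρhat : ℝ)
    (hρhat_ub : ∀ v : V, ℓ v ≤ ρhat)
    (hρhat_mem : ∃ v : V, ℓ v = ρhat)
    (ρstar : ℝ)
    (hρstar_ub : ∀ S : Finset V, S.Nonempty →
      ((G.edgeFinset.filter (fun e => e ∈ S.sym2)).card : ℝ) / (S.card : ℝ) ≤ ρstar)
    (hρstar_mem : ∃ S : Finset V, S.Nonempty ∧
      ((G.edgeFinset.filter (fun e => e ∈ S.sym2)).card : ℝ) / (S.card : ℝ) = ρstar) :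
    (1 - 3 * Real.sqrt (η * Real.log (Fintype.card V) / ρhat)) * ρhat ≤ ρstar ∧
      ρstar ≤ ρhat := by
  set n := Fintype.card V with hncard
  have hn0 : (0 : ℝ) < n := by positivity
  have hn2 : (2 : ℝ) ≤ n := by exact_mod_cast hn
  -- ρhat > 0
  have hρpos : 0 < ρhat := by
    have h1 : ((G.edgeFinset.filter (fun e => e ∈ (univ : Finset V).sym2)).card : ℝ)
        ≤ ∑ v ∈ (univ : Finset V), ℓ v :=
      aux_density_ub G f ℓ hf_nonneg hf_sum hℓ univ
    have h2 : G.edgeFinset.filter (fun e => e ∈ (univ : Finset V).sym2) = G.edgeFinset := by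
      apply Finset.filter_true_of_mem
      intro e _
      induction e using Sym2.ind with
      | _ a b => exact Finset.mk_mem_sym2_iff.mpr ⟨Finset.mem_univ a, Finset.mem_univ b⟩
    have h3 : (1 : ℝ) ≤ G.edgeFinset.card := by
      exact_mod_cast Finset.card_pos.mpr hE
    have h4 : ∑ v ∈ (univ : Finset V), ℓ v ≤ n * ρhat := by
      have := Finset.sum_le_sum (fun v (_ : v ∈ (univ : Finset V)) => hρhat_ub v)
      simpa [Finset.sum_const, hncard] using this
    rw [h2] at h1
    nlinarith
  -- upper bound ρ* ≤ ρ̂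
  have hub : ρstar ≤ ρhat := by
    obtain ⟨S, hSne, hSeq⟩ := hρstar_mem
    have hcard : (0 : ℝ) < S.card := by exact_mod_cast Finset.card_pos.mpr hSne
    rw [← hSeq, div_le_iff₀ hcard]
    calc ((G.edgeFinset.filter (fun e => e ∈ S.sym2)).card : ℝ)
        ≤ ∑ v ∈ S, ℓ v := aux_density_ub G f ℓ hf_nonneg hf_sum hℓ S
      _ ≤ ∑ v ∈ S, ρhat := Finset.sum_le_sum (fun v _ => hρhat_ub v)
      _ = S.card * ρhat := by rw [Finset.sum_const]; ring
      _ = ρhat * S.card := by ring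
  refine ⟨?_, hub⟩
  -- ρ* ≥ 0
  have hρstar_nonneg : 0 ≤ ρstar := by
    obtain ⟨S, hSne, hSeq⟩ := hρstar_mem
    rw [← hSeq]
    positivity
  set L := Real.log n with hLdef
  have hL : Real.log 2 ≤ L := Real.log_le_log (by norm_num) hn2
  have hlog2 : (0.6931471803 : ℝ) < Real.log 2 := Real.log_two_gt_d9
  have hLpos : 0 < L := by linarith
  set θ := Real.sqrt (η * L / ρhat) with hθdef
  have hθnonneg : 0 ≤ θ := Real.sqrt_nonneg _
  have hθsq : θ ^ 2 = η * L / ρhat := Real.sq_sqrt (by positivity)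
  -- level sets
  set S : ℕ → Finset V := fun i => univ.filter (fun v => ρhat - i * η ≤ ℓ v) with hSdef
  have hSmono : ∀ i j : ℕ, i ≤ j → S i ⊆ S j := by
    intro i j hij v hv
    simp only [hSdef, Finset.mem_filter, Finset.mem_univ, true_and] at hv ⊢
    have : (i : ℝ) ≤ j := by exact_mod_cast hij
    nlinarith
  have hS0 : (S 0).Nonempty := by
    obtain ⟨v, hv⟩ := hρhat_mem
    exact ⟨v, by simp [hSdef, hv]⟩
  have hS0card : (1 : ℝ) ≤ (S 0).card := by
    exact_mod_cast Finset.card_pos.mpr hS0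
  have hScard : ∀ i, ((S i).card : ℝ) ≤ n := by
    intro i
    exact_mod_cast Finset.card_le_card (Finset.subset_univ _)
  have hSpos : ∀ i, (0 : ℝ) < (S i).card := by
    intro i
    have := Finset.card_pos.mpr (hS0.mono (hSmono 0 i (Nat.zero_le _)))
    exact_mod_cast this
  -- key inequality
  have hkey : ∀ i : ℕ, (ρhat - i * η) * (S i).card ≤
      ((G.edgeFinset.filter (fun e => e ∈ (S (i + 1)).sym2)).card : ℝ) := by
    intro i
    have h1 : (ρhat - i * η) * (S i).card ≤ ∑ v ∈ S i, ℓ v := by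
      have := Finset.sum_le_sum (fun v hv => by
        simp only [hSdef, Finset.mem_filter, Finset.mem_univ, true_and] at hv
        exact hv : ∀ v ∈ S i, ρhat - i * η ≤ ℓ v)
      calc (ρhat - i * η) * (S i).card = ∑ _v ∈ S i, (ρhat - i * η) := by
            rw [Finset.sum_const]; ring
        _ ≤ ∑ v ∈ S i, ℓ v := this
    refine h1.trans (aux_density_lb G f ℓ hf_nonneg hf_sum hℓ (S i) (S (i + 1))
      (hSmono i (i + 1) (Nat.le_succ i)) ?_)
    intro u v hadj hu hpos
    have hlu := hstab u v hadj hpos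
    simp only [hSdef, Finset.mem_filter, Finset.mem_univ, true_and] at hu ⊢
    push_cast
    linarith
  -- degenerate case: lower bound trivial
  rcases le_or_gt (1 - 3 * θ) 0 with htriv | hθsmall
  · calc (1 - 3 * θ) * ρhat ≤ 0 := mul_nonpos_of_nonpos_of_nonneg htriv hρpos.le
      _ ≤ ρstar := hρstar_nonneg
  have hθlt : θ < 1 / 3 := by linarith
  -- case η = 0
  rcases eq_or_lt_of_le hη with hη0 | hηpos
  · have hθ0 : θ = 0 := by
      rw [hθdef, ← hη0]
      simp
    rw [hθ0]
    have hk := hkey 0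
    have hS01 : S 1 = S 0 := by
      apply Finset.filter_congr
      intro v _
      rw [← hη0]
      norm_num
    rw [hS01] at hk
    have hd := hρstar_ub (S 0) hS0
    have h0 : (ρhat : ℝ) * (S 0).card ≤
        ((G.edgeFinset.filter (fun e => e ∈ (S 0).sym2)).card : ℝ) := by
      have : (ρhat - (0 : ℕ) * η) = ρhat := by push_cast; ring
      rwa [this] at hk
    have hc0 := hSpos 0
    have hle : ρhat ≤ ((G.edgeFinset.filter (fun e => e ∈ (S 0).sym2)).card : ℝ) /
        ((S 0).card : ℝ) := by
      rw [le_div_iff₀ hc0]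
      linarith
    linarith [hle.trans hd]
  have hθpos : 0 < θ := by
    rw [hθdef]
    positivity
  -- choose k
  set k : ℕ := ⌊L / Real.log (1 + θ)⌋₊ + 1 with hkdef
  have hlog1θ : θ / (1 + θ) ≤ Real.log (1 + θ) := by
    have h := Real.log_le_sub_one_of_pos (show (0:ℝ) < 1 / (1 + θ) by positivity)
    rw [Real.log_div one_ne_zero (by positivity), Real.log_one] at h
    have : 1 / (1 + θ) - 1 = -(θ / (1 + θ)) := by field_simp; ring
    rw [this] at h
    linarith
  have hlogpos : 0 < Real.log (1 + θ) := by
    have : 0 < θ / (1 + θ) := by positivity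
    linarith
  have hk_lb : L / Real.log (1 + θ) < k := by
    rw [hkdef]
    push_cast
    exact Nat.lt_floor_add_one _
  have hk_ub : (k : ℝ) ≤ L / Real.log (1 + θ) + 1 := by
    rw [hkdef]
    push_cast
    have := Nat.floor_le (show (0:ℝ) ≤ L / Real.log (1 + θ) by positivity)
    linarith
  -- kη is small
  have hkη : (k : ℝ) * η ≤ θ * (1 + θ) * ρhat + θ ^ 2 * ρhat / Real.log 2 := by
    have h1 : (k : ℝ) * η ≤ (L / Real.log (1 + θ) + 1) * η :=
      mul_le_mul_of_nonneg_right hk_ub hη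
    have h2 : L / Real.log (1 + θ) ≤ L * (1 + θ) / θ := by
      rw [div_le_div_iff₀ hlogpos hθpos]
      calc L * θ = L * ((1 + θ) * (θ / (1 + θ))) := by field_simp
        _ ≤ L * ((1 + θ) * Real.log (1 + θ)) := by
            apply mul_le_mul_of_nonneg_left _ hLpos.le
            exact mul_le_mul_of_nonneg_left hlog1θ (by positivity)
        _ = L * (1 + θ) * Real.log (1 + θ) := by ring
    have hηL : η * L = θ ^ 2 * ρhat := by
      rw [hθsq]; field_simp
    have h3 : (L / Real.log (1 + θ)) * η ≤ θ * (1 + θ) * ρhat := by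
      calc (L / Real.log (1 + θ)) * η ≤ (L * (1 + θ) / θ) * η :=
            mul_le_mul_of_nonneg_right h2 hη
        _ = (η * L) * (1 + θ) / θ := by ring
        _ = θ ^ 2 * ρhat * (1 + θ) / θ := by rw [hηL]
        _ = θ * (1 + θ) * ρhat := by field_simp
    have h4 : η ≤ θ ^ 2 * ρhat / Real.log 2 := by
      have : η = θ ^ 2 * ρhat / L := by rw [hθsq]; field_simp
      rw [this]
      apply div_le_div_of_nonneg_left _ (by linarith) hL
      positivity
    nlinarith
  -- final arithmetic: (1-3θ)(1+θ)ρ̂ ≤ ρ̂ - kη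
  have harith : (1 - 3 * θ) * (1 + θ) * ρhat ≤ ρhat - k * η := by
    have hθle : θ ≤ Real.log 2 := by linarith
    have h5 : θ ^ 2 * ρhat / Real.log 2 ≤ θ * ρhat := by
      rw [div_le_iff₀ (by linarith)]
      nlinarith [mul_le_mul_of_nonneg_right hθle (mul_nonneg hθnonneg hρpos.le)]
    nlinarith [hkη, h5, mul_nonneg (mul_nonneg hθnonneg hθnonneg) hρpos.le]
  -- pigeonhole
  have hpigeon : ∃ i, i < k ∧ ((S (i + 1)).card : ℝ) ≤ (1 + θ) * (S i).card := by
    by_contra hcon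
    push_neg at hcon
    have hgrow : ∀ j, j ≤ k → (1 + θ) ^ j ≤ ((S j).card : ℝ) := by
      intro j
      induction j with
      | zero => intro _; simpa using hS0card
      | succ j ih =>
        intro hjk
        have hj : j < k := Nat.lt_of_succ_le hjk
        have h1 := ih hj.le
        have h2 := hcon j hj
        calc (1 + θ) ^ (j + 1) = (1 + θ) * (1 + θ) ^ j := by ring
          _ ≤ (1 + θ) * (S j).card := by
              exact mul_le_mul_of_nonneg_left h1 (by positivity)
          _ ≤ ((S (j + 1)).card : ℝ) := h2.le
    have h1 : (n : ℝ) < (1 + θ) ^ k := by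
      have hlt : L < k * Real.log (1 + θ) := by
        rw [div_lt_iff₀ hlogpos] at hk_lb
        linarith
      have : Real.log n < Real.log ((1 + θ) ^ k) := by
        rw [Real.log_pow]
        exact hlt
      have hpow : (0 : ℝ) < (1 + θ) ^ k := by positivity
      exact (Real.log_lt_log_iff hn0 hpow).mp this
    have h2 := hgrow k le_rfl
    have h3 := hScard k
    linarith
  obtain ⟨i, hik, hicard⟩ := hpigeon
  -- assemble
  have hiη : (i : ℝ) * η ≤ k * η := by
    apply mul_le_mul_of_nonneg_right _ hη
    exact_mod_cast hik.le
  have hnum_nonneg : 0 ≤ ρhat - i * η := by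
    have h6 : 0 ≤ (1 - 3 * θ) * (1 + θ) * ρhat :=
      mul_nonneg (mul_nonneg hθsmall.le (by positivity)) hρpos.le
    linarith
  have hd := hρstar_ub (S (i + 1)) (hS0.mono (hSmono 0 (i + 1) (Nat.zero_le _)))
  have hci := hSpos i
  have hci1 := hSpos (i + 1)
  have hkeyi := hkey i
  have hchain : (ρhat - i * η) / (1 + θ) ≤ ρstar := by
    have step1 : (ρhat - i * η) / (1 + θ) ≤ (ρhat - i * η) * (S i).card /
        ((S (i + 1)).card : ℝ) := by
      rw [div_le_div_iff₀ (by positivity) hci1]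
      calc (ρhat - i * η) * (S (i + 1)).card ≤ (ρhat - i * η) * ((1 + θ) * (S i).card) :=
            mul_le_mul_of_nonneg_left hicard hnum_nonneg
        _ = (ρhat - i * η) * (S i).card * (1 + θ) := by ring
    have step2 : (ρhat - i * η) * (S i).card / ((S (i + 1)).card : ℝ) ≤
        ((G.edgeFinset.filter (fun e => e ∈ (S (i + 1)).sym2)).card : ℝ) /
          ((S (i + 1)).card : ℝ) :=
      (div_le_div_iff_of_pos_right hci1).mpr hkeyi
    exact step1.trans (step2.trans hd)
  have h1θ : (0 : ℝ) < 1 + θ := by positivity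
  calc (1 - 3 * θ) * ρhat = (1 - 3 * θ) * (1 + θ) * ρhat / (1 + θ) := by
        field_simp
    _ ≤ (ρhat - k * η) / (1 + θ) := (div_le_div_iff_of_pos_right h1θ).mpr harith
    _ ≤ (ρhat - i * η) / (1 + θ) := (div_le_div_iff_of_pos_right h1θ).mpr (by linarith)
    _ ≤ ρstar := hchain
end

section
/- Let G = (V,E) be a finite simple undirected graph, let η ≥ 0, and let f be an η-locally-stable fractional edge-load assignment on G with vertex loads ℓ_v and maximum load ρ̂ = max_{v∈V} ℓ_v. For each integer i ≥ 0 define T_i = { v ∈ V : ℓ_v ≥ ρ̂ − η·i }. Then for every integer k ≥ 0, Σ_{u∈T_k} ℓ_u ≤ |E(T_{k+1})|. -/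
/-!
Double-count the load of `T k` edge by edge. Each edge distributes a total load of `1`, and by
local stability an edge that gives positive load to a vertex of `T k` has both endpoints in
`T (k + 1)`; so only edges of `E(T (k + 1))` contribute, each at most `1`.
-/

open Finset

section EdgeLoad

variable {V : Type*} [DecidableEq V] {G : SimpleGraph V} {f : Sym2 V → V → ℝ}

omit [DecidableEq V] in
lemma share_nonneg_right (hf_nonneg : ∀ u v : V, G.Adj u v → 0 ≤ f s(u, v) u)
    {u v : V} (hadj : G.Adj u v) : 0 ≤ f s(u, v) v := by
  simpa only [Sym2.eq_swap] using hf_nonneg v u hadj.symm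

lemma sum_share_le_ite_mem_sym2 (S S' : Finset V)
    (hf_nonneg : ∀ u v : V, G.Adj u v → 0 ≤ f s(u, v) u)
    (hf_sum : ∀ u v : V, G.Adj u v → f s(u, v) u + f s(u, v) v = 1)
    (hclosed : ∀ u v : V, G.Adj u v → u ∈ S → 0 < f s(u, v) u → s(u, v) ∈ S'.sym2)
    {u v : V} (hadj : G.Adj u v) :
    ∑ w ∈ S with w ∈ s(u, v), f s(u, v) w ≤ if s(u, v) ∈ S'.sym2 then 1 else 0 := by
  split_ifs with hmem
  · calc ∑ w ∈ S with w ∈ s(u, v), f s(u, v) w ≤ ∑ w ∈ {u, v}, f s(u, v) w := by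
          refine sum_le_sum_of_subset_of_nonneg (fun w hw => by simpa using (mem_filter.1 hw).2) ?_
          intro w hw _
          rcases mem_insert.1 hw with rfl | hw
          · exact hf_nonneg w v hadj
          · rw [mem_singleton.1 hw]; exact share_nonneg_right hf_nonneg hadj
      _ = 1 := by rw [sum_pair hadj.ne, hf_sum u v hadj]
  · refine sum_nonpos fun w hw => not_lt.1 fun hpos => hmem ?_
    obtain ⟨hwS, rfl | rfl⟩ := by simpa only [mem_filter, Sym2.mem_iff] using hw
    · exact hclosed w v hadj hwS hpos
    · rw [Sym2.eq_swap] at hpos ⊢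
      exact hclosed w u hadj.symm hwS hpos

variable [Fintype V] [DecidableRel G.Adj]

lemma sum_load_le_card_edges_sym2 (S S' : Finset V)
    (hf_nonneg : ∀ u v : V, G.Adj u v → 0 ≤ f s(u, v) u)
    (hf_sum : ∀ u v : V, G.Adj u v → f s(u, v) u + f s(u, v) v = 1)
    (hclosed : ∀ u v : V, G.Adj u v → u ∈ S → 0 < f s(u, v) u → s(u, v) ∈ S'.sym2) :
    ∑ u ∈ S, ∑ e ∈ G.edgeFinset with u ∈ e, f e u ≤
      ((G.edgeFinset.filter (fun e => e ∈ S'.sym2)).card : ℝ) :=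
  calc ∑ u ∈ S, ∑ e ∈ G.edgeFinset with u ∈ e, f e u
      = ∑ e ∈ G.edgeFinset, ∑ u ∈ S with u ∈ e, f e u :=
        sum_comm' fun u e => by simp only [mem_filter]; tauto
    _ ≤ ∑ e ∈ G.edgeFinset, if e ∈ S'.sym2 then (1 : ℝ) else 0 := by
        refine sum_le_sum fun e he => ?_
        induction e using Sym2.ind with
        | h u v =>
          exact sum_share_le_ite_mem_sym2 S S' hf_nonneg hf_sum hclosed (G.mem_edgeFinset.1 he)
    _ = _ := sum_boole _ _

end EdgeLoad

theorem level_set_load_bound_general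
    {V : Type*} [Fintype V] [DecidableEq V]
    (G : SimpleGraph V) [DecidableRel G.Adj]
    (η : ℝ) (hη : 0 ≤ η)
    (f : Sym2 V → V → ℝ)
    (hf_nonneg : ∀ u v : V, G.Adj u v → 0 ≤ f s(u, v) u)
    (hf_sum : ∀ u v : V, G.Adj u v → f s(u, v) u + f s(u, v) v = 1)
    (ℓ : V → ℝ)
    (hℓ : ∀ v : V, ℓ v = ∑ e ∈ G.edgeFinset.filter (fun e => v ∈ e), f e v)
    (hstab : ∀ u v : V, G.Adj u v → 0 < f s(u, v) u → ℓ u ≤ ℓ v + η)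
    (ρhat : ℝ)
    (T : ℕ → Finset V)
    (hT : ∀ i : ℕ, T i = Finset.univ.filter (fun v => ρhat - η * i ≤ ℓ v)) :
    ∀ k : ℕ, ∑ u ∈ T k, ℓ u ≤
      ((G.edgeFinset.filter (fun e => e ∈ (T (k + 1)).sym2)).card : ℝ) := by
  intro k
  have hmemT : ∀ (i : ℕ) (v : V), v ∈ T i ↔ ρhat - η * i ≤ ℓ v := by simp [hT]
  have hclosed : ∀ u v : V, G.Adj u v → u ∈ T k → 0 < f s(u, v) u →
      s(u, v) ∈ (T (k + 1)).sym2 := by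
    intro u v hadj hu hpos
    have hstep := hstab u v hadj hpos
    rw [hmemT] at hu
    rw [mk_mem_sym2_iff, hmemT, hmemT]
    push_cast
    constructor <;> linarith
  calc ∑ u ∈ T k, ℓ u = ∑ u ∈ T k, ∑ e ∈ G.edgeFinset with u ∈ e, f e u :=
        sum_congr rfl fun u _ => hℓ u
    _ ≤ _ := sum_load_le_card_edges_sym2 _ _ hf_nonneg hf_sum hclosed

/-- For an η-locally-stable fractional edge-load assignment with
maximum load `ρ̂` and level sets `T_i = {v : ℓ_v ≥ ρ̂ − η·i}`, for every `k ≥ 0` the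
total load on `T_k` is at most `|E(T_{k+1})|`. -/
theorem level_set_load_bound
    {V : Type*} [Fintype V] [DecidableEq V]
    (G : SimpleGraph V) [DecidableRel G.Adj]
    (η : ℝ) (hη : 0 ≤ η)
    (f : Sym2 V → V → ℝ)
    (hf_nonneg : ∀ u v : V, G.Adj u v → 0 ≤ f s(u, v) u)
    (hf_sum : ∀ u v : V, G.Adj u v → f s(u, v) u + f s(u, v) v = 1)
    (ℓ : V → ℝ)
    (hℓ : ∀ v : V, ℓ v = ∑ e ∈ G.edgeFinset.filter (fun e => v ∈ e), f e v)
    (hstab : ∀ u v : V, G.Adj u v → 0 < f s(u, v) u → ℓ u ≤ ℓ v + η)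
    (ρhat : ℝ)
    (hρhat_ub : ∀ v : V, ℓ v ≤ ρhat)
    (hρhat_mem : ∃ v : V, ℓ v = ρhat)
    (T : ℕ → Finset V)
    (hT : ∀ i : ℕ, T i = Finset.univ.filter (fun v => ρhat - η * i ≤ ℓ v)) :
    ∀ k : ℕ, ∑ u ∈ T k, ℓ u ≤
      ((G.edgeFinset.filter (fun e => e ∈ (T (k + 1)).sym2)).card : ℝ) :=
  level_set_load_bound_general G η hη f hf_nonneg hf_sum ℓ hℓ hstab ρhat T hT
end

section
/- Let G = (V,E) be a finite simple undirected graph, let η ≥ 0, and let f be an η-locally-stable fractional edge-load assignment on G with vertex loads ℓ_v and maximum load ρ̂ = max_{v∈V} ℓ_v. For each integer i ≥ 0 define T_i = { v ∈ V : ℓ_v ≥ ρ̂ − η·i }. Then for every integer k ≥ 0, |E(T_{k+1})| ≥ |T_k| · (ρ̂ − η·k); in particular, if T_{k+1} is nonempty then ρ_G(T_{k+1}) ≥ (|T_k|/|T_{k+1}|)·(ρ̂ − η·k). -/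
open Finset

/-!
Every vertex `v ∈ T_k` sends positive load only along edges `vw` with `ℓ_w ≥ ℓ_v - η`, hence
with `w ∈ T_{k+1}`; since also `T_k ⊆ T_{k+1}`, all load of `T_k` sits on edges inside
`T_{k+1}`. Each such edge carries total load `1`, so `|T_k|·(ρ̂ - η k) ≤ ∑_{v ∈ T_k} ℓ_v`
is at most the number of edges inside `T_{k+1}`.
-/

namespace SimpleGraph

variable {V : Type*} [DecidableEq V] {G : SimpleGraph V} {f : Sym2 V → V → ℝ}

theorem sum_filter_mem_edge_le_one (hf_nonneg : ∀ u v, G.Adj u v → 0 ≤ f s(u, v) u)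
    (hf_sum : ∀ u v, G.Adj u v → f s(u, v) u + f s(u, v) v = 1)
    {a b : V} (hab : G.Adj a b) (S : Finset V) :
    ∑ v ∈ S.filter (· ∈ s(a, b)), f s(a, b) v ≤ 1 := by
  have hsub : S.filter (· ∈ s(a, b)) ⊆ {a, b} := fun v hv => by
    simpa using (mem_filter.mp hv).2
  calc ∑ v ∈ S.filter (· ∈ s(a, b)), f s(a, b) v
      ≤ ∑ v ∈ ({a, b} : Finset V), f s(a, b) v := by
        refine sum_le_sum_of_subset_of_nonneg hsub fun v hv _ => ?_
        rcases mem_insert.mp hv with rfl | hv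
        · exact hf_nonneg v b hab
        · rw [mem_singleton.mp hv, Sym2.eq_swap]
          exact hf_nonneg b a hab.symm
    _ = 1 := by rw [sum_pair hab.ne, hf_sum a b hab]

variable [Fintype V] [DecidableRel G.Adj]

theorem sum_filter_mem_edge_le_indicator (hf_nonneg : ∀ u v, G.Adj u v → 0 ≤ f s(u, v) u)
    (hf_sum : ∀ u v, G.Adj u v → f s(u, v) u + f s(u, v) v = 1) {S U : Finset V}
    (hSU : S ⊆ U) (hsupp : ∀ v ∈ S, ∀ w, G.Adj v w → 0 < f s(v, w) v → w ∈ U)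
    {e : Sym2 V} (he : e ∈ G.edgeFinset) :
    ∑ v ∈ S.filter (· ∈ e), f e v ≤ if e ∈ U.sym2 then 1 else 0 := by
  induction e with
  | h a b =>
    have hab : G.Adj a b := mem_edgeFinset.mp he
    split_ifs with hU
    · exact sum_filter_mem_edge_le_one hf_nonneg hf_sum hab S
    · refine sum_nonpos fun v hv => not_lt.mp fun hpos => hU ?_
      obtain ⟨hvS, hve⟩ := mem_filter.mp hv
      rcases Sym2.mem_iff.mp hve with rfl | rfl
      · exact mk_mem_sym2_iff.mpr ⟨hSU hvS, hsupp v hvS b hab hpos⟩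
      · rw [Sym2.eq_swap] at hpos ⊢
        exact mk_mem_sym2_iff.mpr ⟨hSU hvS, hsupp v hvS a hab.symm hpos⟩

theorem sum_load_le_card_edges_inside (hf_nonneg : ∀ u v, G.Adj u v → 0 ≤ f s(u, v) u)
    (hf_sum : ∀ u v, G.Adj u v → f s(u, v) u + f s(u, v) v = 1) {S U : Finset V}
    (hSU : S ⊆ U) (hsupp : ∀ v ∈ S, ∀ w, G.Adj v w → 0 < f s(v, w) v → w ∈ U) :
    ∑ v ∈ S, ∑ e ∈ G.edgeFinset.filter (fun e => v ∈ e), f e v ≤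
      #(G.edgeFinset.filter (· ∈ U.sym2)) := by
  calc ∑ v ∈ S, ∑ e ∈ G.edgeFinset.filter (fun e => v ∈ e), f e v
      = ∑ e ∈ G.edgeFinset, ∑ v ∈ S.filter (· ∈ e), f e v :=
        sum_comm' fun v e => by simp only [mem_filter]; tauto
    _ ≤ ∑ e ∈ G.edgeFinset, if e ∈ U.sym2 then (1 : ℝ) else 0 :=
        sum_le_sum fun e he => sum_filter_mem_edge_le_indicator hf_nonneg hf_sum hSU hsupp he
    _ = #(G.edgeFinset.filter (· ∈ U.sym2)) := by rw [sum_boole]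

end SimpleGraph

theorem level_set_density_bound_general
    {V : Type*} [Fintype V] [DecidableEq V]
    (G : SimpleGraph V) [DecidableRel G.Adj]
    (η : ℝ) (hη : 0 ≤ η)
    (f : Sym2 V → V → ℝ)
    (hf_nonneg : ∀ u v : V, G.Adj u v → 0 ≤ f s(u, v) u)
    (hf_sum : ∀ u v : V, G.Adj u v → f s(u, v) u + f s(u, v) v = 1)
    (ℓ : V → ℝ)
    (hℓ : ∀ v : V, ℓ v = ∑ e ∈ G.edgeFinset.filter (fun e => v ∈ e), f e v)
    (hstab : ∀ u v : V, G.Adj u v → 0 < f s(u, v) u → ℓ u ≤ ℓ v + η)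
    (ρhat : ℝ)
    (T : ℕ → Finset V)
    (hT : ∀ i : ℕ, T i = Finset.univ.filter (fun v => ρhat - η * i ≤ ℓ v)) :
    ∀ k : ℕ,
      ((T k).card : ℝ) * (ρhat - η * k) ≤
        ((G.edgeFinset.filter (fun e => e ∈ (T (k + 1)).sym2)).card : ℝ) ∧
      ((T (k + 1)).Nonempty →
        ((T k).card : ℝ) / ((T (k + 1)).card : ℝ) * (ρhat - η * k) ≤
          ((G.edgeFinset.filter (fun e => e ∈ (T (k + 1)).sym2)).card : ℝ) /
            ((T (k + 1)).card : ℝ)) := by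
  intro k
  have hmem : ∀ i v, v ∈ T i ↔ ρhat - η * i ≤ ℓ v := by simp [hT]
  have hsub : T k ⊆ T (k + 1) := fun v hv => by
    rw [hmem] at hv ⊢; push_cast; linarith
  have hsupp : ∀ v ∈ T k, ∀ w, G.Adj v w → 0 < f s(v, w) v → w ∈ T (k + 1) :=
    fun v hv w hvw hpos => by
      have := hstab v w hvw hpos
      rw [hmem] at hv ⊢; push_cast; linarith
  have key : ((T k).card : ℝ) * (ρhat - η * k) ≤
      #(G.edgeFinset.filter (· ∈ (T (k + 1)).sym2)) :=
    calc ((T k).card : ℝ) * (ρhat - η * k) ≤ ∑ v ∈ T k, ℓ v := by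
          simpa using card_nsmul_le_sum (T k) ℓ _ fun v hv => (hmem k v).mp hv
      _ ≤ _ := by
          simpa only [hℓ] using G.sum_load_le_card_edges_inside hf_nonneg hf_sum hsub hsupp
  refine ⟨key, fun _ => ?_⟩
  rw [div_mul_eq_mul_div]
  exact div_le_div_of_nonneg_right key (Nat.cast_nonneg _)

/-- For an η-locally-stable fractional edge-load assignment with
maximum load `ρ̂` and level sets `T_i = {v : ℓ_v ≥ ρ̂ − η·i}`, for every `k ≥ 0` we
have `|E(T_{k+1})| ≥ |T_k|·(ρ̂ − η·k)`; in particular, if `T_{k+1}` is nonempty then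
`ρ_G(T_{k+1}) ≥ (|T_k|/|T_{k+1}|)·(ρ̂ − η·k)`. -/
theorem level_set_density_bound
    {V : Type*} [Fintype V] [DecidableEq V]
    (G : SimpleGraph V) [DecidableRel G.Adj]
    (η : ℝ) (hη : 0 ≤ η)
    (f : Sym2 V → V → ℝ)
    (hf_nonneg : ∀ u v : V, G.Adj u v → 0 ≤ f s(u, v) u)
    (hf_sum : ∀ u v : V, G.Adj u v → f s(u, v) u + f s(u, v) v = 1)
    (ℓ : V → ℝ)
    (hℓ : ∀ v : V, ℓ v = ∑ e ∈ G.edgeFinset.filter (fun e => v ∈ e), f e v)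
    (hstab : ∀ u v : V, G.Adj u v → 0 < f s(u, v) u → ℓ u ≤ ℓ v + η)
    (ρhat : ℝ)
    (hρhat_ub : ∀ v : V, ℓ v ≤ ρhat)
    (hρhat_mem : ∃ v : V, ℓ v = ρhat)
    (T : ℕ → Finset V)
    (hT : ∀ i : ℕ, T i = Finset.univ.filter (fun v => ρhat - η * i ≤ ℓ v)) :
    ∀ k : ℕ,
      ((T k).card : ℝ) * (ρhat - η * k) ≤
        ((G.edgeFinset.filter (fun e => e ∈ (T (k + 1)).sym2)).card : ℝ) ∧
      ((T (k + 1)).Nonempty →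
        ((T k).card : ℝ) / ((T (k + 1)).card : ℝ) * (ρhat - η * k) ≤
          ((G.edgeFinset.filter (fun e => e ∈ (T (k + 1)).sym2)).card : ℝ) /
            ((T (k + 1)).card : ℝ)) :=
  level_set_density_bound_general G η hη f hf_nonneg hf_sum ℓ hℓ hstab ρhat T hT
end

section
/- Let G = (V,E) be a finite simple undirected graph with n = |V| ≥ 2 vertices and at least one edge, let η > 0, and let f be an η-locally-stable fractional edge-load assignment on G with vertex loads ℓ_v and maximum load ρ̂ = max_{v∈V} ℓ_v. Let ρ_est > 0 satisfy ρ_est ≤ ρ̂ ≤ 2·ρ_est, set r = √(2·η·log n / ρ_est), define T_i = { v ∈ V : ℓ_v ≥ ρ̂ − η·i } for each integer i ≥ 0, and let k be the maximal integer such that |T_i| ≥ (1+r)·|T_{i−1}| for all integers 1 ≤ i ≤ k. Then T_{k+1} is nonempty and ρ_G(T_{k+1}) ≥ ρ*_G · (1 − 4·√(η·log n / ρ_est)), where log denotes the natural logarithm. -/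
open Finset

/-- With an estimate `ρ_est ≤ ρ̂ ≤ 2·ρ_est`, `r = √(2η·log n/ρ_est)`,
level sets `T_i = {v : ℓ_v ≥ ρ̂ − η·i}`, and `k` the maximal integer such that
`|T_i| ≥ (1+r)·|T_{i−1}|` for all `1 ≤ i ≤ k`, the set `T_{k+1}` is nonempty and
has density at least `ρ*_G·(1 − 4√(η·log n/ρ_est))`. -/
theorem extracted_subgraph_density
    {V : Type*} [Fintype V] [DecidableEq V]
    (G : SimpleGraph V) [DecidableRel G.Adj]
    (hn : 2 ≤ Fintype.card V)
    (hE : G.edgeFinset.Nonempty)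
    (η : ℝ) (hη : 0 < η)
    (f : Sym2 V → V → ℝ)
    (hf_nonneg : ∀ u v : V, G.Adj u v → 0 ≤ f s(u, v) u)
    (hf_sum : ∀ u v : V, G.Adj u v → f s(u, v) u + f s(u, v) v = 1)
    (ℓ : V → ℝ)
    (hℓ : ∀ v : V, ℓ v = ∑ e ∈ G.edgeFinset.filter (fun e => v ∈ e), f e v)
    (hstab : ∀ u v : V, G.Adj u v → 0 < f s(u, v) u → ℓ u ≤ ℓ v + η)
    (ρhat : ℝ)
    (hρhat_ub : ∀ v : V, ℓ v ≤ ρhat)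
    (hρhat_mem : ∃ v : V, ℓ v = ρhat)
    (ρstar : ℝ)
    (hρstar_ub : ∀ S : Finset V, S.Nonempty →
      ((G.edgeFinset.filter (fun e => e ∈ S.sym2)).card : ℝ) / (S.card : ℝ) ≤ ρstar)
    (hρstar_mem : ∃ S : Finset V, S.Nonempty ∧
      ((G.edgeFinset.filter (fun e => e ∈ S.sym2)).card : ℝ) / (S.card : ℝ) = ρstar)
    (ρest : ℝ) (hρest_pos : 0 < ρest)
    (hρest_le : ρest ≤ ρhat) (hle_ρest : ρhat ≤ 2 * ρest)
    (r : ℝ) (hr : r = Real.sqrt (2 * η * Real.log (Fintype.card V) / ρest))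
    (T : ℕ → Finset V)
    (hT : ∀ i : ℕ, T i = Finset.univ.filter (fun v => ρhat - η * i ≤ ℓ v))
    (k : ℕ)
    (hk : ∀ i : ℕ, 1 ≤ i → i ≤ k →
      (1 + r) * ((T (i - 1)).card : ℝ) ≤ ((T i).card : ℝ))
    (hk_max : ((T (k + 1)).card : ℝ) < (1 + r) * ((T k).card : ℝ)) :
    (T (k + 1)).Nonempty ∧
      ρstar * (1 - 4 * Real.sqrt (η * Real.log (Fintype.card V) / ρest)) ≤
        ((G.edgeFinset.filter (fun e => e ∈ (T (k + 1)).sym2)).card : ℝ) /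
          ((T (k + 1)).card : ℝ) := by
  classical
  have hn1 : (1:ℝ) < (Fintype.card V : ℝ) := by exact_mod_cast lt_of_lt_of_le one_lt_two (by exact_mod_cast hn)
  have hlog : 0 < Real.log (Fintype.card V) := Real.log_pos hn1
  set s : ℝ := Real.sqrt (η * Real.log (Fintype.card V) / ρest) with hs_def
  have hs2 : s ^ 2 = η * Real.log (Fintype.card V) / ρest :=
    Real.sq_sqrt (by positivity)
  have hs_pos : 0 < s := Real.sqrt_pos.mpr (by positivity)
  have hr_pos : 0 < r := by rw [hr]; exact Real.sqrt_pos.mpr (by positivity)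
  have hrs : r ^ 2 = 2 * s ^ 2 := by
    rw [hr, Real.sq_sqrt (by positivity), hs2]; ring
  have hρhat_pos : 0 < ρhat := lt_of_lt_of_le hρest_pos hρest_le
  -- membership in T i
  have hTmem : ∀ (i : ℕ) (v : V), v ∈ T i ↔ ρhat - η * i ≤ ℓ v := by
    intro i v
    rw [hT i, Finset.mem_filter]
    simp
  -- nonemptiness
  obtain ⟨v₀, hv₀⟩ := hρhat_mem
  have hv₀T : ∀ i : ℕ, v₀ ∈ T i := by
    intro i
    rw [hTmem]
    have : (0:ℝ) ≤ η * i := by positivity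
    linarith [hv₀.ge]
  have hne : (T (k + 1)).Nonempty := ⟨v₀, hv₀T (k+1)⟩
  refine ⟨hne, ?_⟩
  have hcard1 : (0:ℝ) < ((T (k+1)).card : ℝ) := by
    exact_mod_cast Finset.card_pos.mpr hne
  -- double counting swap
  have hswap : ∀ S : Finset V, ∑ v ∈ S, ℓ v
      = ∑ e ∈ G.edgeFinset, ∑ v ∈ S.filter (fun v => v ∈ e), f e v := by
    intro S
    simp_rw [hℓ, Finset.sum_filter]
    exact Finset.sum_comm
  -- nonnegativity of f on both endpoints
  have hfnn : ∀ u w : V, G.Adj u w → 0 ≤ f s(u, w) w := by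
    intro u w h
    have := hf_nonneg w u h.symm
    rwa [Sym2.eq_swap] at this
  -- inner sum upper bound by 1
  have hinner_le : ∀ (S : Finset V) (u w : V), G.Adj u w →
      ∑ v ∈ S.filter (fun v => v ∈ s(u, w)), f s(u, w) v ≤ 1 := by
    intro S u w h
    have hsub : S.filter (fun v => v ∈ s(u, w)) ⊆ {u, w} := by
      intro v hv
      rw [Finset.mem_filter, Sym2.mem_iff] at hv
      simp only [Finset.mem_insert, Finset.mem_singleton]
      exact hv.2
    have h1 : ∑ v ∈ S.filter (fun v => v ∈ s(u, w)), f s(u, w) v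
        ≤ ∑ v ∈ ({u, w} : Finset V), f s(u, w) v := by
      apply Finset.sum_le_sum_of_subset_of_nonneg hsub
      intro v hv _
      rcases Finset.mem_insert.mp hv with h' | h'
      · rw [h']; exact hf_nonneg u w h
      · rw [Finset.mem_singleton] at h'; rw [h']; exact hfnn u w h
    have h2 : ∑ v ∈ ({u, w} : Finset V), f s(u, w) v = 1 := by
      rw [Finset.sum_pair h.ne]
      exact hf_sum u w h
    linarith
  -- inner sum nonneg
  have hinner_nn : ∀ (S : Finset V) (u w : V), G.Adj u w →
      0 ≤ ∑ v ∈ S.filter (fun v => v ∈ s(u, w)), f s(u, w) v := by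
    intro S u w h
    apply Finset.sum_nonneg
    intro v hv
    rw [Finset.mem_filter, Sym2.mem_iff] at hv
    rcases hv.2 with h' | h'
    · rw [h']; exact hf_nonneg u w h
    · rw [h']; exact hfnn u w h
  -- Lemma B : |E(S)| ≤ ∑_{v ∈ S} ℓ v
  have hB : ∀ S : Finset V,
      ((G.edgeFinset.filter (fun e => e ∈ S.sym2)).card : ℝ) ≤ ∑ v ∈ S, ℓ v := by
    intro S
    rw [hswap S, ← Finset.sum_boole]
    apply Finset.sum_le_sum
    intro e he
    induction e using Sym2.ind with
    | _ u w =>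
      have hadj : G.Adj u w := by rwa [SimpleGraph.mem_edgeFinset, SimpleGraph.mem_edgeSet] at he
      by_cases hmem : s(u, w) ∈ S.sym2
      · rw [if_pos hmem]
        rw [Finset.mk_mem_sym2_iff] at hmem
        have hsub : ({u, w} : Finset V) ⊆ S.filter (fun v => v ∈ s(u, w)) := by
          intro v hv
          rw [Finset.mem_filter, Sym2.mem_iff]
          rcases Finset.mem_insert.mp hv with h' | h'
          · rw [h']; exact ⟨hmem.1, Or.inl rfl⟩
          · rw [Finset.mem_singleton] at h'; rw [h']; exact ⟨hmem.2, Or.inr rfl⟩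
        have h1 : ∑ v ∈ ({u, w} : Finset V), f s(u, w) v
            ≤ ∑ v ∈ S.filter (fun v => v ∈ s(u, w)), f s(u, w) v := by
          apply Finset.sum_le_sum_of_subset_of_nonneg hsub
          intro v hv _
          rw [Finset.mem_filter, Sym2.mem_iff] at hv
          rcases hv.2 with h' | h'
          · rw [h']; exact hf_nonneg u w hadj
          · rw [h']; exact hfnn u w hadj
        rw [Finset.sum_pair hadj.ne, hf_sum u w hadj] at h1
        exact h1
      · rw [if_neg hmem]
        exact hinner_nn S u w hadj
  -- stability claim
  have claim : ∀ a b : V, G.Adj a b → a ∈ T k → s(a, b) ∉ (T (k+1)).sym2 →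
      f s(a, b) a = 0 := by
    intro a b hadj ha hnmem
    by_contra hne0
    have hpos : 0 < f s(a, b) a := lt_of_le_of_ne (hf_nonneg a b hadj) (Ne.symm hne0)
    have hst := hstab a b hadj hpos
    rw [hTmem] at ha
    have hb : b ∈ T (k+1) := by
      rw [hTmem]
      push_cast
      linarith
    have ha' : a ∈ T (k+1) := by
      rw [hTmem]
      push_cast
      rw [hTmem] at hb
      have : (0:ℝ) ≤ η := hη.le
      push_cast
      linarith
    exact hnmem (Finset.mk_mem_sym2_iff.mpr ⟨ha', hb⟩)
  -- Lemma A : ∑_{v ∈ T k} ℓ v ≤ |E(T (k+1))|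
  have hA : ∑ v ∈ T k, ℓ v
      ≤ ((G.edgeFinset.filter (fun e => e ∈ (T (k+1)).sym2)).card : ℝ) := by
    rw [hswap (T k), ← Finset.sum_boole]
    apply Finset.sum_le_sum
    intro e he
    induction e using Sym2.ind with
    | _ u w =>
      have hadj : G.Adj u w := by rwa [SimpleGraph.mem_edgeFinset, SimpleGraph.mem_edgeSet] at he
      by_cases hmem : s(u, w) ∈ (T (k+1)).sym2
      · rw [if_pos hmem]; exact hinner_le (T k) u w hadj
      · rw [if_neg hmem]
        apply le_of_eq
        apply Finset.sum_eq_zero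
        intro v hv
        rw [Finset.mem_filter, Sym2.mem_iff] at hv
        rcases hv.2 with h' | h'
        · subst h'; exact claim v w hadj hv.1 hmem
        · subst h'
          have hsw : s(u, v) = s(v, u) := Sym2.eq_swap
          have := claim v u hadj.symm hv.1 (by rwa [← hsw])
          rwa [← hsw] at this
  -- ρstar ≤ ρhat
  have hρsh : ρstar ≤ ρhat := by
    obtain ⟨S₀, hS₀ne, hS₀eq⟩ := hρstar_mem
    have hc : (0:ℝ) < (S₀.card : ℝ) := by exact_mod_cast Finset.card_pos.mpr hS₀ne
    rw [← hS₀eq, div_le_iff₀ hc]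
    calc ((G.edgeFinset.filter (fun e => e ∈ S₀.sym2)).card : ℝ)
        ≤ ∑ v ∈ S₀, ℓ v := hB S₀
      _ ≤ ∑ _v ∈ S₀, ρhat := Finset.sum_le_sum (fun v _ => hρhat_ub v)
      _ = ρhat * S₀.card := by rw [Finset.sum_const, nsmul_eq_mul]; ring
  -- ρstar ≥ 0
  have hρs_nn : 0 ≤ ρstar := by
    obtain ⟨S₀, hS₀ne, hS₀eq⟩ := hρstar_mem
    rw [← hS₀eq]
    positivity
  -- growth bound : (1+r)^k ≤ |T k|
  have hgrow : ∀ i : ℕ, i ≤ k → (1 + r) ^ i ≤ ((T i).card : ℝ) := by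
    intro i
    induction i with
    | zero =>
      intro _
      simp only [pow_zero]
      have : 1 ≤ (T 0).card := Finset.card_pos.mpr ⟨v₀, hv₀T 0⟩
      exact_mod_cast this
    | succ j ih =>
      intro hjk
      have h1 := ih (Nat.le_of_succ_le hjk)
      have h2 := hk (j+1) (Nat.le_add_left 1 j) hjk
      simp only [Nat.add_sub_cancel] at h2
      calc (1 + r) ^ (j + 1) = (1 + r) * (1 + r) ^ j := by ring
        _ ≤ (1 + r) * ((T j).card : ℝ) := by
            apply mul_le_mul_of_nonneg_left h1 (by linarith)
        _ ≤ ((T (j+1)).card : ℝ) := h2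
  have hgk : (1 + r) ^ k ≤ ((Fintype.card V : ℕ) : ℝ) := by
    refine le_trans (hgrow k le_rfl) ?_
    exact_mod_cast (Finset.card_le_univ (T k)).trans_eq Finset.card_univ
  -- log bound
  have hklog : (k : ℝ) * Real.log (1 + r) ≤ Real.log (Fintype.card V) := by
    have h1 : Real.log ((1 + r) ^ k) ≤ Real.log (Fintype.card V) :=
      Real.log_le_log (by positivity) hgk
    rwa [Real.log_pow] at h1
  have hlog1r : r / (1 + r) ≤ Real.log (1 + r) := by
    have h := Real.one_sub_inv_le_log_of_pos (x := 1 + r) (by linarith)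
    have he : 1 - (1 + r)⁻¹ = r / (1 + r) := by field_simp; ring
    linarith [he ▸ h]
  -- η k ≤ ρhat * r * (1+r) / 2
  have hηlog : η * Real.log (Fintype.card V) = s ^ 2 * ρest := by
    rw [hs2]; field_simp
  have hηk : η * k ≤ ρhat * (r * (1 + r)) / 2 := by
    have h1r : (0:ℝ) < 1 + r := by linarith
    have hkr : (k : ℝ) * r ≤ Real.log (Fintype.card V) * (1 + r) := by
      have h1 : (k : ℝ) * (r / (1 + r)) ≤ Real.log (Fintype.card V) := by
        calc (k : ℝ) * (r / (1 + r)) ≤ (k : ℝ) * Real.log (1 + r) :=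
              mul_le_mul_of_nonneg_left hlog1r (Nat.cast_nonneg k)
          _ ≤ Real.log (Fintype.card V) := hklog
      have h2 := mul_le_mul_of_nonneg_right h1 h1r.le
      have h3 : (k : ℝ) * (r / (1 + r)) * (1 + r) = (k : ℝ) * r := by field_simp
      linarith
    have h2 : η * k * r ≤ s ^ 2 * ρest * (1 + r) := by
      calc η * k * r = η * ((k:ℝ) * r) := by ring
        _ ≤ η * (Real.log (Fintype.card V) * (1 + r)) :=
            mul_le_mul_of_nonneg_left hkr hη.le
        _ = η * Real.log (Fintype.card V) * (1 + r) := by ring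
        _ = s ^ 2 * ρest * (1 + r) := by rw [hηlog]
    have h3 : s ^ 2 * ρest * (1 + r) ≤ (r ^ 2 / 2) * ρhat * (1 + r) := by
      have : s ^ 2 = r ^ 2 / 2 := by linarith [hrs]
      rw [this]
      apply mul_le_mul_of_nonneg_right _ h1r.le
      apply mul_le_mul_of_nonneg_left hρest_le (by positivity)
    -- divide by r
    have h4 : η * k * r ≤ (ρhat * (r * (1 + r)) / 2) * r := by
      calc η * k * r ≤ (r ^ 2 / 2) * ρhat * (1 + r) := le_trans h2 h3
        _ = (ρhat * (r * (1 + r)) / 2) * r := by ring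
    exact le_of_mul_le_mul_right h4 hr_pos
  -- lower bound on edge count
  have hsum_lb : ((T k).card : ℝ) * (ρhat - η * k) ≤ ∑ v ∈ T k, ℓ v := by
    have := Finset.card_nsmul_le_sum (T k) ℓ (ρhat - η * k)
      (fun v hv => (hTmem k v).mp hv)
    rwa [nsmul_eq_mul] at this
  have hE_lb : ((T k).card : ℝ) * (ρhat - η * k)
      ≤ ((G.edgeFinset.filter (fun e => e ∈ (T (k+1)).sym2)).card : ℝ) :=
    le_trans hsum_lb hA
  -- final
  rcases le_or_gt (1 - 4 * s) 0 with hcase | hcase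
  · have : ρstar * (1 - 4 * s) ≤ 0 := mul_nonpos_of_nonneg_of_nonpos hρs_nn hcase
    refine le_trans this (div_nonneg (Nat.cast_nonneg _) (Nat.cast_nonneg _))
  · rw [le_div_iff₀ hcard1]
    have hscalar : (1 - 4 * s) * (1 + r) ≤ 1 - r * (1 + r) / 2 := by
      nlinarith [sq_nonneg (4 * s - 3/2 * r), sq_nonneg (r - s), mul_pos hr_pos hs_pos]
    have hTk_nn : (0:ℝ) ≤ ((T k).card : ℝ) := Nat.cast_nonneg _
    calc ρstar * (1 - 4 * s) * ((T (k+1)).card : ℝ)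
        ≤ ρhat * (1 - 4 * s) * ((T (k+1)).card : ℝ) := by
          apply mul_le_mul_of_nonneg_right _ hcard1.le
          exact mul_le_mul_of_nonneg_right hρsh hcase.le
      _ ≤ ρhat * (1 - 4 * s) * ((1 + r) * ((T k).card : ℝ)) := by
          exact mul_le_mul_of_nonneg_left hk_max.le
            (mul_nonneg hρhat_pos.le hcase.le)
      _ = (ρhat * ((1 - 4 * s) * (1 + r))) * ((T k).card : ℝ) := by ring
      _ ≤ (ρhat - η * k) * ((T k).card : ℝ) := by
          apply mul_le_mul_of_nonneg_right _ hTk_nn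
          have h5 := mul_le_mul_of_nonneg_left hscalar hρhat_pos.le
          have h6 : ρhat * (1 - r * (1 + r) / 2) = ρhat - ρhat * (r * (1 + r)) / 2 := by
            ring
          linarith
      _ = ((T k).card : ℝ) * (ρhat - η * k) := by ring
      _ ≤ _ := hE_lb
end

section
/- Let G = (V,E) be a finite simple undirected graph with n = |V| ≥ 2 vertices and at least one edge, let η ≥ 0, and let O be an orientation of G such that for every edge oriented u→v, indeg(v) ≤ indeg(u) + η. Let D = max_{v∈V} indeg(v). Then ρ*_G ≥ (1 − 3·√(η·log n / D))·D, where log denotes the natural logarithm. -/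
/-!
Let `A c` be the set of vertices of in-degree at least `c`. By stability, every edge whose head
lies in `A c` has both endpoints in `A (c - η)`, so
`c · |A c| ≤ ∑_{A c} indeg ≤ e(A (c - η)) ≤ ρ* · |A (c - η)|`.
If `ρ* < (1 - 3s) D` with `s = √(η log n / D)`, iterate this from `A D ≠ ∅` for
`k = ⌈log n / s⌉` steps: the thresholds stay above `(1 - 3s/2) D`, so each step multiplies `|A|`
by some `q` with `log q ≥ 3s/2`, and `|A|` would exceed `n^(3/2) > n`.
-/

open Finset

namespace SimpleGraph

variable {V : Type*} [Fintype V] [DecidableEq V] (G : SimpleGraph V) [DecidableRel G.Adj]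
  (o : Sym2 V → V)

def inDeg (v : V) : ℕ := #{e ∈ G.edgeFinset | o e = v}

noncomputable def inDegSuperlevel (c : ℝ) : Finset V := {v | c ≤ (G.inDeg o v : ℝ)}

theorem sum_inDeg (S : Finset V) : ∑ v ∈ S, G.inDeg o v = #{e ∈ G.edgeFinset | o e ∈ S} :=
  sum_card_fiberwise_eq_card_filter _ _ _

variable {G o} {η : ℝ}

theorem mem_sym2_inDegSuperlevel_of_head_mem (hη : 0 ≤ η) (ho : ∀ e ∈ G.edgeFinset, o e ∈ e)
    (hstab : ∀ u v, G.Adj u v → o s(u, v) = v → (G.inDeg o v : ℝ) ≤ G.inDeg o u + η)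
    {c : ℝ} {e : Sym2 V} (he : e ∈ G.edgeFinset) (hhead : o e ∈ G.inDegSuperlevel o c) :
    e ∈ (G.inDegSuperlevel o (c - η)).sym2 := by
  induction e using Sym2.ind with | _ u v => ?_
  have hadj : G.Adj u v := by simpa using he
  simp only [inDegSuperlevel, mem_filter, mem_univ, true_and] at hhead
  simp only [mk_mem_sym2_iff, inDegSuperlevel, mem_filter, mem_univ, true_and]
  rcases Sym2.mem_iff.1 (ho _ he) with h | h
  · have := hstab v u hadj.symm (by rwa [Sym2.eq_swap])
    rw [h] at hhead
    constructor <;> linarith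
  · have := hstab u v hadj h
    rw [h] at hhead
    constructor <;> linarith

theorem mul_card_inDegSuperlevel_le (hη : 0 ≤ η) (ho : ∀ e ∈ G.edgeFinset, o e ∈ e)
    (hstab : ∀ u v, G.Adj u v → o s(u, v) = v → (G.inDeg o v : ℝ) ≤ G.inDeg o u + η) (c : ℝ) :
    c * #(G.inDegSuperlevel o c) ≤
      #{e ∈ G.edgeFinset | e ∈ (G.inDegSuperlevel o (c - η)).sym2} := by
  calc c * #(G.inDegSuperlevel o c) ≤ ∑ v ∈ G.inDegSuperlevel o c, (G.inDeg o v : ℝ) := by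
        rw [mul_comm, ← nsmul_eq_mul]
        exact card_nsmul_le_sum _ _ _ fun v hv => (mem_filter.1 hv).2
    _ = #{e ∈ G.edgeFinset | o e ∈ G.inDegSuperlevel o c} := by
        rw [← sum_inDeg]
        push_cast
        rfl
    _ ≤ _ := by
        gcongr with e he
        exact mem_sym2_inDegSuperlevel_of_head_mem hη ho hstab he

theorem card_edges_le_mul_card {ρ : ℝ}
    (hρ : ∀ S : Finset V, S.Nonempty → (#{e ∈ G.edgeFinset | e ∈ S.sym2} : ℝ) / #S ≤ ρ)
    (S : Finset V) : (#{e ∈ G.edgeFinset | e ∈ S.sym2} : ℝ) ≤ ρ * #S := by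
  rcases S.eq_empty_or_nonempty with rfl | hS
  · simp
  · rw [← div_le_iff₀ (by simpa using hS)]
    exact hρ S hS

end SimpleGraph

theorem pow_le_of_superlevel_growth {f : ℝ → ℝ} {D η ρ q : ℝ} (hη : 0 ≤ η) (hρ : 0 < ρ)
    (hq : 0 ≤ q) (hf : ∀ c, 0 ≤ f c) (hfD : 1 ≤ f D)
    (hgrowth : ∀ c, c * f c ≤ ρ * f (c - η)) :
    ∀ k : ℕ, q * ρ ≤ D - k * η → q ^ k ≤ f (D - k * η)
  | 0, _ => by simpa using hfD
  | k + 1, hk => by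
    push_cast at hk ⊢
    have ih := pow_le_of_superlevel_growth hη hρ hq hf hfD hgrowth k (by linarith)
    have hstep : q * ρ * f (D - k * η) ≤ (D - k * η) * f (D - k * η) :=
      mul_le_mul_of_nonneg_right (by linarith) (hf _)
    have hnext := hgrowth (D - k * η)
    rw [sub_sub, ← add_one_mul] at hnext
    calc q ^ (k + 1) = q * q ^ k := pow_succ' q k
      _ ≤ q * f (D - k * η) := mul_le_mul_of_nonneg_left ih hq
      _ ≤ f (D - (k + 1) * η) := le_of_mul_le_mul_left (by linarith) hρ

theorem le_of_superlevel_growth {f : ℝ → ℝ} {D η ρ N : ℝ} (hD : 0 < D) (hη : 0 ≤ η)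
    (hN : 2 ≤ N) (hf : ∀ c, 0 ≤ f c) (hfN : ∀ c, f c ≤ N) (hfD : 1 ≤ f D)
    (hgrowth : ∀ c, c * f c ≤ ρ * f (c - η)) :
    (1 - 3 * √(η * Real.log N / D)) * D ≤ ρ := by
  have hρ : 0 < ρ :=
    pos_of_mul_pos_left ((mul_pos hD (by linarith)).trans_le (hgrowth D)) (hf _)
  rcases hη.eq_or_lt with rfl | hη
  · simpa using le_of_mul_le_mul_right (by simpa using hgrowth D) (by linarith : 0 < f D)
  set L := Real.log N
  have hL : 2 / 3 < L :=
    (Real.log_two_gt_d9.trans_le' (by norm_num)).trans_le (Real.log_le_log two_pos hN)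
  set s := √(η * L / D) with hs
  have hs0 : 0 < s := by positivity
  have hηL : η * L = s ^ 2 * D := by
    rw [hs, Real.sq_sqrt (by positivity)]
    field_simp
  by_contra! hρs
  have hs3 : 0 < 1 - 3 * s := pos_of_mul_pos_left (hρ.trans hρs) hD.le
  set k := ⌈L / s⌉₊
  have hk : L / s ≤ k := Nat.le_ceil _
  have hkη : k * η ≤ 3 / 2 * s * D := by
    have hk' : (k : ℝ) < L / s + 1 := Nat.ceil_lt_add_one (by positivity)
    have hLs : L / s * η = s * D := by
      field_simp
      linarith
    have h2η : 2 * η ≤ s * D := by nlinarith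
    nlinarith
  set q := (D - k * η) / ρ
  have hqρ : q * ρ = D - k * η := div_mul_cancel₀ _ hρ.ne'
  have hq : 0 < q := div_pos (by nlinarith) hρ
  have hlog_le : k * Real.log q ≤ L := by
    rw [← Real.log_pow]
    exact Real.log_le_log (by positivity)
      ((pow_le_of_superlevel_growth hη.le hρ hq.le hf hfD hgrowth k hqρ.le).trans (hfN _))
  have hlog_ge : 3 / 2 * s ≤ Real.log q := by
    refine le_trans ?_ (Real.one_sub_inv_le_log_of_pos hq)
    have : ρ ≤ (1 - 3 / 2 * s) * (D - k * η) := by nlinarith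
    rw [inv_div, le_sub_comm, div_le_iff₀ (by nlinarith)]
    linarith
  have : 3 / 2 * L ≤ k * Real.log q := by
    calc 3 / 2 * L = L / s * (3 / 2 * s) := by field_simp
      _ ≤ k * Real.log q := mul_le_mul hk hlog_ge (by positivity) (by positivity)
  linarith

theorem stable_orientation_density_general
    {V : Type*} [Fintype V] [DecidableEq V]
    (G : SimpleGraph V) [DecidableRel G.Adj]
    (hn : 2 ≤ Fintype.card V)
    (η : ℝ) (hη : 0 ≤ η)
    (o : Sym2 V → V)
    (ho : ∀ e ∈ G.edgeFinset, o e ∈ e)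
    (indeg : V → ℕ)
    (hindeg : ∀ v : V, indeg v = (G.edgeFinset.filter (fun e => o e = v)).card)
    (hstab : ∀ u v : V, G.Adj u v → o s(u, v) = v → (indeg v : ℝ) ≤ (indeg u : ℝ) + η)
    (D : ℕ)
    (hD_mem : ∃ v : V, indeg v = D)
    (ρstar : ℝ)
    (hρstar_ub : ∀ S : Finset V, S.Nonempty →
      ((G.edgeFinset.filter (fun e => e ∈ S.sym2)).card : ℝ) / (S.card : ℝ) ≤ ρstar) :
    (1 - 3 * Real.sqrt (η * Real.log (Fintype.card V) / (D : ℝ))) * (D : ℝ) ≤ ρstar := by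
  obtain rfl : indeg = G.inDeg o := funext hindeg
  obtain ⟨v, rfl⟩ := hD_mem
  rcases (G.inDeg o v).eq_zero_or_pos with hD | hD
  · have hρ : 0 ≤ ρstar :=
      (div_nonneg (by positivity) (by positivity)).trans (hρstar_ub univ ⟨v, mem_univ v⟩)
    simpa [hD] using hρ
  refine le_of_superlevel_growth (f := fun c => #(G.inDegSuperlevel o c))
    (by exact_mod_cast hD) hη (by exact_mod_cast hn) (fun _ => by positivity)
    (fun _ => by exact_mod_cast card_le_univ _) ?_ fun c =>
      (SimpleGraph.mul_card_inDegSuperlevel_le hη ho hstab c).trans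
        (SimpleGraph.card_edges_le_mul_card hρstar_ub _)
  exact_mod_cast one_le_card.2 ⟨v, by simp [SimpleGraph.inDegSuperlevel]⟩

/-- If an orientation is locally η-stable, i.e. every edge oriented
`u→v` satisfies `indeg(v) ≤ indeg(u) + η`, and `D` is the maximum in-degree, then
`ρ*_G ≥ (1 − 3√(η·log n/D))·D`. -/
theorem stable_orientation_density
    {V : Type*} [Fintype V] [DecidableEq V]
    (G : SimpleGraph V) [DecidableRel G.Adj]
    (hn : 2 ≤ Fintype.card V)
    (hE : G.edgeFinset.Nonempty)
    (η : ℝ) (hη : 0 ≤ η)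
    (o : Sym2 V → V)
    (ho : ∀ e ∈ G.edgeFinset, o e ∈ e)
    (indeg : V → ℕ)
    (hindeg : ∀ v : V, indeg v = (G.edgeFinset.filter (fun e => o e = v)).card)
    (hstab : ∀ u v : V, G.Adj u v → o s(u, v) = v → (indeg v : ℝ) ≤ (indeg u : ℝ) + η)
    (D : ℕ)
    (hD_ub : ∀ v : V, indeg v ≤ D)
    (hD_mem : ∃ v : V, indeg v = D)
    (ρstar : ℝ)
    (hρstar_ub : ∀ S : Finset V, S.Nonempty →
      ((G.edgeFinset.filter (fun e => e ∈ S.sym2)).card : ℝ) / (S.card : ℝ) ≤ ρstar)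
    (hρstar_mem : ∃ S : Finset V, S.Nonempty ∧
      ((G.edgeFinset.filter (fun e => e ∈ S.sym2)).card : ℝ) / (S.card : ℝ) = ρstar) :
    (1 - 3 * Real.sqrt (η * Real.log (Fintype.card V) / (D : ℝ))) * (D : ℝ) ≤ ρstar :=
  stable_orientation_density_general G hn η hη o ho indeg hindeg hstab D hD_mem ρstar hρstar_ub
end

section
/- Let G = (V,E,ω) be a finite simple undirected vertex-weighted graph with n = |V| ≥ 2 vertices and at least one edge, where ω(v) ≥ 1 for all v and W = max_{v∈V} ω(v). Let η ≥ 0 and let f be an η-locally-stable weighted fractional edge-load assignment on G with vertex loads ℓ_v and maximum load ρ̂ = max_{v∈V} ℓ_v. Then (1 − 3·√(η·log(n·W) / ρ̂))·ρ̂ ≤ ρ*_G ≤ ρ̂, where log denotes the natural logarithm. -/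
open Finset

lemma swap_sum {V : Type*} [Fintype V] [DecidableEq V]
    (G : SimpleGraph V) [DecidableRel G.Adj] (f : Sym2 V → V → ℝ) (S : Finset V) :
    ∑ v ∈ S, ∑ e ∈ G.edgeFinset.filter (fun e => v ∈ e), f e v
      = ∑ e ∈ G.edgeFinset, ∑ v ∈ S.filter (fun v => v ∈ e), f e v := by
  simp_rw [Finset.sum_filter]
  exact Finset.sum_comm

lemma key_ineq {V : Type*} [Fintype V] [DecidableEq V]
    (G : SimpleGraph V) [DecidableRel G.Adj] (f : Sym2 V → V → ℝ)
    (hnn : ∀ e ∈ G.edgeFinset, ∀ v ∈ e, 0 ≤ f e v)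
    (hsum : ∀ u v : V, G.Adj u v → f s(u, v) u + f s(u, v) v = 1)
    (S T : Finset V) (hST : S ⊆ T)
    (hclosed : ∀ u ∈ S, ∀ v : V, G.Adj u v → 0 < f s(u, v) u → v ∈ T) :
    ∑ v ∈ S, ∑ e ∈ G.edgeFinset.filter (fun e => v ∈ e), f e v
      ≤ ((G.edgeFinset.filter (fun e => e ∈ T.sym2)).card : ℝ) := by
  rw [swap_sum]
  have h2 : ((G.edgeFinset.filter (fun e => e ∈ T.sym2)).card : ℝ)
      = ∑ e ∈ G.edgeFinset, (if e ∈ T.sym2 then (1:ℝ) else 0) := by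
    rw [Finset.sum_ite, Finset.sum_const, Finset.sum_const]
    simp
  rw [h2]
  apply Finset.sum_le_sum
  intro e he
  induction e using Sym2.ind with
  | _ u v =>
    have hadj : G.Adj u v := by rwa [SimpleGraph.mem_edgeFinset, SimpleGraph.mem_edgeSet] at he
    have hne : u ≠ v := hadj.ne
    by_cases hT : s(u,v) ∈ T.sym2
    · rw [if_pos hT]
      have hsub : S.filter (fun w => w ∈ s(u,v)) ⊆ {u, v} := by
        intro w hw
        simp only [Finset.mem_filter, Sym2.mem_iff] at hw
        simp only [Finset.mem_insert, Finset.mem_singleton]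
        tauto
      calc ∑ w ∈ S.filter (fun w => w ∈ s(u,v)), f s(u,v) w
          ≤ ∑ w ∈ ({u, v} : Finset V), f s(u,v) w := by
            apply Finset.sum_le_sum_of_subset_of_nonneg hsub
            intro w hw _
            apply hnn _ he
            simp only [Finset.mem_insert, Finset.mem_singleton] at hw
            rw [Sym2.mem_iff]; tauto
        _ = f s(u,v) u + f s(u,v) v := Finset.sum_pair hne
        _ = 1 := hsum u v hadj
    · rw [if_neg hT]
      apply le_of_eq
      apply Finset.sum_eq_zero
      intro w hw
      simp only [Finset.mem_filter, Sym2.mem_iff] at hw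
      obtain ⟨hwS, hw2⟩ := hw
      by_contra hpos
      have hfpos : 0 < f s(u,v) w := lt_of_le_of_ne (hnn _ he w (by rw [Sym2.mem_iff]; tauto)) (Ne.symm hpos)
      rcases hw2 with rfl | rfl
      · exact hT (Finset.mk_mem_sym2_iff.2 ⟨hST hwS, hclosed _ hwS v hadj hfpos⟩)
      · have hfpos' : 0 < f s(w,u) w := by rwa [Sym2.eq_swap] at hfpos
        exact hT (Finset.mk_mem_sym2_iff.2 ⟨hclosed _ hwS u hadj.symm hfpos', hST hwS⟩)

lemma upper_ineq {V : Type*} [Fintype V] [DecidableEq V]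
    (G : SimpleGraph V) [DecidableRel G.Adj] (f : Sym2 V → V → ℝ)
    (hnn : ∀ e ∈ G.edgeFinset, ∀ v ∈ e, 0 ≤ f e v)
    (hsum : ∀ u v : V, G.Adj u v → f s(u, v) u + f s(u, v) v = 1)
    (S : Finset V) :
    ((G.edgeFinset.filter (fun e => e ∈ S.sym2)).card : ℝ)
      ≤ ∑ v ∈ S, ∑ e ∈ G.edgeFinset.filter (fun e => v ∈ e), f e v := by
  rw [swap_sum]
  have h1 : ((G.edgeFinset.filter (fun e => e ∈ S.sym2)).card : ℝ)
      = ∑ e ∈ G.edgeFinset.filter (fun e => e ∈ S.sym2), (1:ℝ) := by simp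
  rw [h1]
  have h2 : ∀ e ∈ G.edgeFinset.filter (fun e => e ∈ S.sym2),
      (1:ℝ) = ∑ v ∈ S.filter (fun v => v ∈ e), f e v := by
    intro e he
    simp only [Finset.mem_filter] at he
    obtain ⟨he, heS⟩ := he
    induction e using Sym2.ind with
    | _ u v =>
      have hadj : G.Adj u v := by rwa [SimpleGraph.mem_edgeFinset, SimpleGraph.mem_edgeSet] at he
      have hne : u ≠ v := hadj.ne
      rw [Finset.mk_mem_sym2_iff] at heS
      have : S.filter (fun w => w ∈ s(u,v)) = {u, v} := by
        ext w
        simp only [Finset.mem_filter, Sym2.mem_iff, Finset.mem_insert, Finset.mem_singleton]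
        constructor
        · tauto
        · rintro (rfl | rfl) <;> simp [heS.1, heS.2]
      rw [this, Finset.sum_pair hne, hsum u v hadj]
  rw [Finset.sum_congr rfl h2]
  apply Finset.sum_le_sum_of_subset_of_nonneg (Finset.filter_subset _ _)
  intro e he _
  apply Finset.sum_nonneg
  intro w hw
  simp only [Finset.mem_filter] at hw
  exact hnn _ he _ hw.2



set_option maxHeartbeats 1600000 in
/-- Vertex-weighted version of the local-to-global approximation:
for an η-locally-stable weighted fractional edge-load assignment with maximum load
`ρ̂` and maximum vertex weight `W`, `(1 − 3√(η·log(nW)/ρ̂))·ρ̂ ≤ ρ*_G ≤ ρ̂`. -/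
theorem weighted_local_stability_global_approx
    {V : Type*} [Fintype V] [DecidableEq V]
    (G : SimpleGraph V) [DecidableRel G.Adj]
    (hn : 2 ≤ Fintype.card V)
    (hE : G.edgeFinset.Nonempty)
    (ω : V → ℝ) (hω : ∀ v : V, 1 ≤ ω v)
    (W : ℝ)
    (hW_ub : ∀ v : V, ω v ≤ W)
    (hW_mem : ∃ v : V, ω v = W)
    (η : ℝ) (hη : 0 ≤ η)
    (f : Sym2 V → V → ℝ)
    (hf_nonneg : ∀ u v : V, G.Adj u v → 0 ≤ f s(u, v) u)
    (hf_sum : ∀ u v : V, G.Adj u v → f s(u, v) u + f s(u, v) v = 1)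
    (ℓ : V → ℝ)
    (hℓ : ∀ v : V, ℓ v = (1 / ω v) * ∑ e ∈ G.edgeFinset.filter (fun e => v ∈ e), f e v)
    (hstab : ∀ u v : V, G.Adj u v → 0 < f s(u, v) u → ℓ u ≤ ℓ v + η)
    (ρhat : ℝ)
    (hρhat_ub : ∀ v : V, ℓ v ≤ ρhat)
    (hρhat_mem : ∃ v : V, ℓ v = ρhat)
    (ρstar : ℝ)
    (hρstar_ub : ∀ S : Finset V, S.Nonempty →
      ((G.edgeFinset.filter (fun e => e ∈ S.sym2)).card : ℝ) / (∑ v ∈ S, ω v) ≤ ρstar)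
    (hρstar_mem : ∃ S : Finset V, S.Nonempty ∧
      ((G.edgeFinset.filter (fun e => e ∈ S.sym2)).card : ℝ) / (∑ v ∈ S, ω v) = ρstar) :
    (1 - 3 * Real.sqrt (η * Real.log ((Fintype.card V : ℝ) * W) / ρhat)) * ρhat ≤ ρstar ∧
      ρstar ≤ ρhat := by
    -- basic helpers
  have hnn : ∀ e ∈ G.edgeFinset, ∀ v ∈ e, 0 ≤ f e v := by
    intro e he
    induction e using Sym2.ind with
    | _ a b =>
      have hadj : G.Adj a b := by rwa [SimpleGraph.mem_edgeFinset, SimpleGraph.mem_edgeSet] at he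
      intro v hv
      rw [Sym2.mem_iff] at hv
      rcases hv with rfl | rfl
      · exact hf_nonneg _ _ hadj
      · rw [Sym2.eq_swap]; exact hf_nonneg _ _ hadj.symm
  have hωpos : ∀ v, 0 < ω v := fun v => lt_of_lt_of_le one_pos (hω v)
  have hωℓ : ∀ v, ω v * ℓ v = ∑ e ∈ G.edgeFinset.filter (fun e => v ∈ e), f e v := by
    intro v
    rw [hℓ v, one_div, ← mul_assoc, mul_inv_cancel₀ (hωpos v).ne', one_mul]
  have hρhat_pos : 0 < ρhat := by
    have hhalf : ∀ u v : V, G.Adj u v → 0 < f s(u, v) u → 0 < ρhat := by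
      intro u v hadj hpos
      have hmem : s(u, v) ∈ G.edgeFinset.filter (fun e => u ∈ e) := by
        simp [SimpleGraph.mem_edgeFinset, hadj]
      have hsumge : f s(u, v) u ≤ ∑ e ∈ G.edgeFinset.filter (fun e => u ∈ e), f e u := by
        apply Finset.single_le_sum (f := fun e => f e u) (fun e he => ?_) hmem
        exact hnn e (Finset.mem_filter.1 he).1 u (Finset.mem_filter.1 he).2
      have hlu : 0 < ℓ u := by
        rw [hℓ u]
        have := hωpos u
        have h1 : 0 < ∑ e ∈ G.edgeFinset.filter (fun e => u ∈ e), f e u := lt_of_lt_of_le hpos hsumge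
        positivity
      exact lt_of_lt_of_le hlu (hρhat_ub u)
    obtain ⟨e, he⟩ := hE
    induction e using Sym2.ind with
    | _ u v =>
      have hadj : G.Adj u v := by rwa [SimpleGraph.mem_edgeFinset, SimpleGraph.mem_edgeSet] at he
      have h1 := hf_nonneg u v hadj
      have h3 := hf_sum u v hadj
      rcases lt_or_ge 0 (f s(u, v) u) with hp | hp
      · exact hhalf u v hadj hp
      · have h4 : 0 < f s(u, v) v := by linarith
        have h5 : 0 < f s(v, u) v := by rwa [Sym2.eq_swap]
        exact hhalf v u hadj.symm h5
  -- basic numeric facts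
  set L : ℝ := Real.log ((Fintype.card V : ℝ) * W) with hLdef
  clear_value L
  have hW1 : 1 ≤ W := by obtain ⟨v, hv⟩ := hW_mem; linarith [hω v]
  have hn2 : (2 : ℝ) ≤ (Fintype.card V : ℝ) := by exact_mod_cast hn
  have hnW2 : (2 : ℝ) ≤ (Fintype.card V : ℝ) * W := by nlinarith
  have hL2 : Real.log 2 ≤ L := hLdef ▸ Real.log_le_log (by norm_num) hnW2
  have hlog2 : (0.6931471803 : ℝ) < Real.log 2 := Real.log_two_gt_d9
  have hLpos : 0 < L := by linarith
  -- nonnegativity / positivity of ρstar and weight sums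
  have hsum_pos : ∀ S : Finset V, S.Nonempty → 0 < ∑ v ∈ S, ω v := by
    intro S hS
    obtain ⟨v, hv⟩ := hS
    have h1 : ω v ≤ ∑ u ∈ S, ω u :=
      Finset.single_le_sum (fun u _ => le_trans zero_le_one (hω u)) hv
    linarith [hω v]
  have hρstar_nonneg : 0 ≤ ρstar := by
    obtain ⟨S, hSne, hSeq⟩ := hρstar_mem
    rw [← hSeq]
    exact div_nonneg (Nat.cast_nonneg _) (hsum_pos S hSne).le
  have hEcard_le : ∀ S : Finset V, S.Nonempty →
      ((G.edgeFinset.filter (fun e => e ∈ S.sym2)).card : ℝ) ≤ ρstar * ∑ v ∈ S, ω v := by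
    intro S hS
    have := hρstar_ub S hS
    rw [div_le_iff₀ (hsum_pos S hS)] at this
    exact this
  -- upper bound
  have hub : ρstar ≤ ρhat := by
    obtain ⟨S, hSne, hSeq⟩ := hρstar_mem
    have h1 := upper_ineq G f hnn hf_sum S
    have h2 : ∑ v ∈ S, ∑ e ∈ G.edgeFinset.filter (fun e => v ∈ e), f e v
        = ∑ v ∈ S, ω v * ℓ v := Finset.sum_congr rfl (fun v _ => (hωℓ v).symm)
    have h3 : ∑ v ∈ S, ω v * ℓ v ≤ ρhat * ∑ v ∈ S, ω v := by
      rw [Finset.mul_sum]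
      apply Finset.sum_le_sum
      intro v _
      have := hρhat_ub v
      nlinarith [hωpos v]
    rw [← hSeq, div_le_iff₀ (hsum_pos S hSne)]
    rw [h2] at h1
    linarith
  refine ⟨?_, hub⟩
  -- the level sets
  set B : ℕ → Finset V := fun i => Finset.univ.filter (fun v => ρhat - i * η ≤ ℓ v) with hBdef
  obtain ⟨v0, hv0⟩ := hρhat_mem
  have hv0B : ∀ i, v0 ∈ B i := by
    intro i
    simp only [hBdef, Finset.mem_filter, Finset.mem_univ, true_and, hv0]
    have : (0:ℝ) ≤ (i:ℝ) * η := by positivity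
    linarith
  have hBmono : ∀ i, B i ⊆ B (i + 1) := by
    intro i v hv
    simp only [hBdef, Finset.mem_filter, Finset.mem_univ, true_and] at hv ⊢
    push_cast
    linarith
  have ha_ge1 : ∀ i, (1:ℝ) ≤ ∑ v ∈ B i, ω v := by
    intro i
    have h1 : ω v0 ≤ ∑ v ∈ B i, ω v :=
      Finset.single_le_sum (fun u _ => le_trans zero_le_one (hω u)) (hv0B i)
    linarith [hω v0]
  have ha_ub : ∀ i, ∑ v ∈ B i, ω v ≤ (Fintype.card V : ℝ) * W := by
    intro i
    calc ∑ v ∈ B i, ω v ≤ ∑ v ∈ (Finset.univ : Finset V), ω v :=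
          Finset.sum_le_sum_of_subset_of_nonneg (Finset.subset_univ _)
            (fun v _ _ => le_trans zero_le_one (hω v))
      _ ≤ ∑ _v ∈ (Finset.univ : Finset V), W := Finset.sum_le_sum (fun v _ => hW_ub v)
      _ = (Fintype.card V : ℝ) * W := by
          rw [Finset.sum_const, Finset.card_univ, nsmul_eq_mul]
  have hkey : ∀ i : ℕ, (ρhat - i * η) * ∑ v ∈ B i, ω v
      ≤ ((G.edgeFinset.filter (fun e => e ∈ (B (i+1)).sym2)).card : ℝ) := by
    intro i
    have hclosed : ∀ u ∈ B i, ∀ v : V, G.Adj u v → 0 < f s(u, v) u → v ∈ B (i + 1) := by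
      intro u hu v hadj hpos
      simp only [hBdef, Finset.mem_filter, Finset.mem_univ, true_and] at hu ⊢
      have := hstab u v hadj hpos
      push_cast
      linarith
    have h1 : (ρhat - i * η) * ∑ v ∈ B i, ω v ≤ ∑ v ∈ B i, ω v * ℓ v := by
      rw [Finset.mul_sum]
      apply Finset.sum_le_sum
      intro v hv
      simp only [hBdef, Finset.mem_filter, Finset.mem_univ, true_and] at hv
      nlinarith [hωpos v]
    have h2 : ∑ v ∈ B i, ω v * ℓ v
        = ∑ v ∈ B i, ∑ e ∈ G.edgeFinset.filter (fun e => v ∈ e), f e v :=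
      Finset.sum_congr rfl (fun v _ => hωℓ v)
    calc (ρhat - i * η) * ∑ v ∈ B i, ω v ≤ ∑ v ∈ B i, ω v * ℓ v := h1
      _ = _ := h2
      _ ≤ _ := key_ineq G f hnn hf_sum (B i) (B (i+1)) (hBmono i) hclosed
  -- lower bound for level densities
  have hlevel : ∀ i : ℕ, ρhat - i * η ≤ ρstar * ((∑ v ∈ B (i+1), ω v) / (∑ v ∈ B i, ω v)) := by
    intro i
    have hk := hkey i
    have hE := hEcard_le (B (i+1)) ⟨v0, hv0B _⟩
    have hai : (0:ℝ) < ∑ v ∈ B i, ω v := lt_of_lt_of_le one_pos (ha_ge1 i)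
    have h1 : (ρhat - i * η) * ∑ v ∈ B i, ω v ≤ ρstar * ∑ v ∈ B (i+1), ω v := le_trans hk hE
    rw [← mul_div_assoc, le_div_iff₀ hai]
    exact h1
  -- case η = 0
  by_cases hη0 : η = 0
  · subst hη0
    have hz : (0:ℝ) * L / ρhat = 0 := by ring
    rw [hz, Real.sqrt_zero]
    have hB10 : B 1 = B 0 := by
      ext v
      simp [hBdef]
    have h := hlevel 0
    rw [hB10] at h
    have hai : (0:ℝ) < ∑ v ∈ B 0, ω v := lt_of_lt_of_le one_pos (ha_ge1 0)
    rw [div_self hai.ne', mul_one] at h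
    push_cast at h
    nlinarith
  · have hηpos : 0 < η := lt_of_le_of_ne hη (Ne.symm hη0)
    set ε : ℝ := Real.sqrt (η * L / ρhat) with hεdef
    have hε_nonneg : 0 ≤ ε := Real.sqrt_nonneg _
    have hεpos : 0 < ε := Real.sqrt_pos.2 (by positivity)
    have hε_sq : ε ^ 2 = η * L / ρhat := Real.sq_sqrt (by positivity)
    have hεsq' : ε ^ 2 * ρhat = η * L := by
      rw [hε_sq]; field_simp
    clear_value ε
    by_cases h3ε : 1 ≤ 3 * ε
    · nlinarith
    · -- main case : ε < 1/3
      have hεlt : ε < 1/3 := by linarith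
      obtain ⟨T, hT_lb, hT_ub⟩ : ∃ T : ℕ, 2 * L + ε ≤ (T : ℝ) * ε ∧ (T : ℝ) * ε ≤ 2 * L + 2 * ε := by
        have hcan : 2 * L / ε * ε = 2 * L := div_mul_cancel₀ _ hεpos.ne'
        refine ⟨⌈2 * L / ε⌉₊ + 1, ?_, ?_⟩ <;> push_cast
        · have h := Nat.le_ceil (2 * L / ε)
          nlinarith [mul_le_mul_of_nonneg_right h hεpos.le]
        · have h := (Nat.ceil_lt_add_one (show (0:ℝ) ≤ 2 * L / ε by positivity)).le
          nlinarith [mul_le_mul_of_nonneg_right h hεpos.le]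
      have hlog1ε : ε / 2 ≤ Real.log (1 + ε) := by
        have h := Real.log_le_sub_one_of_pos (show 0 < (1 + ε)⁻¹ by positivity)
        rw [Real.log_inv] at h
        have h2 : (1 + ε)⁻¹ - 1 = -(ε / (1 + ε)) := by field_simp; ring
        rw [h2] at h
        have h3 : ε / 2 ≤ ε / (1 + ε) := by
          rw [div_le_div_iff₀ (by norm_num) (by positivity)]
          nlinarith
        linarith
      have hgrow : (Fintype.card V : ℝ) * W < (1 + ε) ^ T := by
        have hlogs : Real.log ((Fintype.card V : ℝ) * W) < Real.log ((1 + ε) ^ T) := by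
          rw [Real.log_pow, ← hLdef]
          have h1 : L + ε / 2 ≤ (T : ℝ) * (ε / 2) := by linarith
          have h2 : (T : ℝ) * (ε / 2) ≤ (T : ℝ) * Real.log (1 + ε) :=
            mul_le_mul_of_nonneg_left hlog1ε (Nat.cast_nonneg T)
          linarith
        have := (Real.log_lt_log_iff (by positivity) (by positivity)).1 hlogs
        exact this
      have hexists : ∃ i < T, (∑ v ∈ B (i+1), ω v) ≤ (1 + ε) * ∑ v ∈ B i, ω v := by
        by_contra hcon
        push_neg at hcon
        have hind : ∀ j, j ≤ T → (1 + ε) ^ j ≤ ∑ v ∈ B j, ω v := by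
          intro j
          induction j with
          | zero => intro _; simpa using ha_ge1 0
          | succ k ih =>
            intro hk
            have hk' : k < T := Nat.lt_of_succ_le hk
            have h1 := ih hk'.le
            have h2 := hcon k hk'
            have h3 : (0:ℝ) ≤ (1 + ε) ^ k := by positivity
            calc (1 + ε) ^ (k + 1) = (1 + ε) * (1 + ε) ^ k := by ring
              _ ≤ (1 + ε) * ∑ v ∈ B k, ω v := by nlinarith
              _ ≤ ∑ v ∈ B (k+1), ω v := (h2).le
        linarith [hind T le_rfl, ha_ub T, hgrow]
      obtain ⟨i, hiT, hi⟩ := hexists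
      have hai : (0:ℝ) < ∑ v ∈ B i, ω v := lt_of_lt_of_le one_pos (ha_ge1 i)
      have hratio : (∑ v ∈ B (i+1), ω v) / (∑ v ∈ B i, ω v) ≤ 1 + ε := by
        rw [div_le_iff₀ hai]; linarith
      have h5 : ρhat - i * η ≤ ρstar * (1 + ε) := by
        have := hlevel i
        have hr : ρstar * ((∑ v ∈ B (i+1), ω v) / (∑ v ∈ B i, ω v)) ≤ ρstar * (1 + ε) :=
          mul_le_mul_of_nonneg_left hratio hρstar_nonneg
        linarith
      have hiT' : (i : ℝ) ≤ (T : ℝ) := by exact_mod_cast hiT.le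
      have hTη : (T : ℝ) * η ≤ 2 * ε * ρhat + 2 * η := by
        by_contra hcc
        push_neg at hcc
        have h6 := mul_le_mul_of_nonneg_right hT_ub hη
        nlinarith [hεsq', mul_pos hεpos (sub_pos.2 hcc)]
      have hiη : (i : ℝ) * η ≤ 2 * ε * ρhat + 2 * η :=
        le_trans (mul_le_mul_of_nonneg_right hiT' hη) hTη
      have h2η : 2 * η ≤ 3 * η * L := by nlinarith
      have h8 : (1 - 3 * ε) * ρhat * (1 + ε) ≤ ρstar * (1 + ε) := by
        nlinarith [h5, hiη, hεsq', h2η]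
      exact le_of_mul_le_mul_right h8 (by positivity)
end

section
/- Let G = (V,E) be a finite simple undirected graph with vertex weights ω: V → ℝ satisfying ω(v) ≥ 1 for all v, let η ≥ 0, and let f be an η-locally-stable weighted fractional edge-load assignment on G with vertex loads ℓ_v and maximum load ρ̂ = max_{v∈V} ℓ_v. For each integer i ≥ 0 define T_i = { v ∈ V : ℓ_v ≥ ρ̂ − η·i }. Then for every integer k ≥ 0, Σ_{u∈T_k} ω(u)·ℓ_u ≤ |E(T_{k+1})|; in particular |E(T_{k+1})| ≥ ω(T_k)·(ρ̂ − η·k). -/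
/-!
Multiplying the load by the weight gives `ω(u) ℓ_u = Σ_{e ∋ u} f_e(u)`, so after exchanging the
two sums, `Σ_{u ∈ T_k} ω(u) ℓ_u` is a sum over edges of the shares that edges hand to their
endpoints in `T_k`. An edge contributes at most its total share `1`, and it contributes `0` unless
some endpoint `u ∈ T_k` takes a positive share; in that case local stability puts the other
endpoint within `η` of `ℓ_u`, hence in `T_{k+1}`, and `T_k ⊆ T_{k+1}` since `η ≥ 0`. So only edges
of `E(T_{k+1})` contribute, each at most `1`.
-/

open Finset

section EdgeShares

variable {V : Type*} [Fintype V] [DecidableEq V] (G : SimpleGraph V) [DecidableRel G.Adj]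
  (f : Sym2 V → V → ℝ)

lemma sum_sum_incident_eq_sum_edgeFinset_sum (S : Finset V) :
    ∑ u ∈ S, ∑ e ∈ G.edgeFinset.filter (fun e => u ∈ e), f e u =
      ∑ e ∈ G.edgeFinset, ∑ u ∈ S.filter (fun u => u ∈ e), f e u := by
  simp_rw [sum_filter]
  exact sum_comm

variable {G f}

lemma sum_filter_mem_edge_le_ite
    (hf_nonneg : ∀ u v : V, G.Adj u v → 0 ≤ f s(u, v) u)
    (hf_sum : ∀ u v : V, G.Adj u v → f s(u, v) u + f s(u, v) v = 1)
    {S T : Finset V} (hST : S ⊆ T)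
    (hclosed : ∀ u v : V, G.Adj u v → u ∈ S → 0 < f s(u, v) u → v ∈ T)
    {e : Sym2 V} (he : e ∈ G.edgeFinset) :
    ∑ u ∈ S.filter (fun u => u ∈ e), f e u ≤ if e ∈ T.sym2 then 1 else 0 := by
  induction e using Sym2.inductionOn with
  | hf a b =>
  have hab : G.Adj a b := by simpa using he
  have hendpoint : ∀ u ∈ S.filter (fun u => u ∈ s(a, b)), u = a ∨ u = b := fun u hu =>
    Sym2.mem_iff.mp (mem_filter.mp hu).2
  split_ifs with hmem
  · calc ∑ u ∈ S.filter (fun u => u ∈ s(a, b)), f s(a, b) u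
        ≤ ∑ u ∈ {a, b}, f s(a, b) u := by
          refine sum_le_sum_of_subset_of_nonneg (fun u hu => ?_) fun u hu _ => ?_
          · rcases hendpoint u hu with rfl | rfl <;> simp
          · rcases mem_insert.mp hu with rfl | hu
            · exact hf_nonneg u b hab
            · rw [mem_singleton.mp hu, Sym2.eq_swap]
              exact hf_nonneg b a hab.symm
      _ = 1 := by rw [sum_pair hab.ne, hf_sum a b hab]
  · refine sum_nonpos fun u hu => not_lt.mp fun hpos => hmem ?_
    have huS := (mem_filter.mp hu).1
    rw [mk_mem_sym2_iff]
    rcases hendpoint u hu with rfl | rfl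
    · exact ⟨hST huS, hclosed u b hab huS hpos⟩
    · rw [Sym2.eq_swap] at hpos
      exact ⟨hclosed u a hab.symm huS hpos, hST huS⟩

lemma sum_sum_incident_le_card_edges_within
    (hf_nonneg : ∀ u v : V, G.Adj u v → 0 ≤ f s(u, v) u)
    (hf_sum : ∀ u v : V, G.Adj u v → f s(u, v) u + f s(u, v) v = 1)
    {S T : Finset V} (hST : S ⊆ T)
    (hclosed : ∀ u v : V, G.Adj u v → u ∈ S → 0 < f s(u, v) u → v ∈ T) :
    ∑ u ∈ S, ∑ e ∈ G.edgeFinset.filter (fun e => u ∈ e), f e u ≤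
      ((G.edgeFinset.filter (fun e => e ∈ T.sym2)).card : ℝ) := by
  rw [sum_sum_incident_eq_sum_edgeFinset_sum, card_filter]
  push_cast
  exact sum_le_sum fun e he => sum_filter_mem_edge_le_ite hf_nonneg hf_sum hST hclosed he

end EdgeShares

theorem weighted_level_set_load_bound_general
    {V : Type*} [Fintype V] [DecidableEq V]
    (G : SimpleGraph V) [DecidableRel G.Adj]
    (ω : V → ℝ) (hω : ∀ v : V, 1 ≤ ω v)
    (η : ℝ) (hη : 0 ≤ η)
    (f : Sym2 V → V → ℝ)
    (hf_nonneg : ∀ u v : V, G.Adj u v → 0 ≤ f s(u, v) u)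
    (hf_sum : ∀ u v : V, G.Adj u v → f s(u, v) u + f s(u, v) v = 1)
    (ℓ : V → ℝ)
    (hℓ : ∀ v : V, ℓ v = (1 / ω v) * ∑ e ∈ G.edgeFinset.filter (fun e => v ∈ e), f e v)
    (hstab : ∀ u v : V, G.Adj u v → 0 < f s(u, v) u → ℓ u ≤ ℓ v + η)
    (ρhat : ℝ)
    (T : ℕ → Finset V)
    (hT : ∀ i : ℕ, T i = Finset.univ.filter (fun v => ρhat - η * i ≤ ℓ v)) :
    ∀ k : ℕ,
      (∑ u ∈ T k, ω u * ℓ u ≤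
        ((G.edgeFinset.filter (fun e => e ∈ (T (k + 1)).sym2)).card : ℝ)) ∧
      ((∑ v ∈ T k, ω v) * (ρhat - η * k) ≤
        ((G.edgeFinset.filter (fun e => e ∈ (T (k + 1)).sym2)).card : ℝ)) := by
  intro k
  have hmemT : ∀ i v, v ∈ T i ↔ ρhat - η * i ≤ ℓ v := fun i v => by simp [hT]
  have hmono : T k ⊆ T (k + 1) := fun v hv => by
    rw [hmemT] at hv ⊢
    push_cast
    linarith
  have hclosed : ∀ u v, G.Adj u v → u ∈ T k → 0 < f s(u, v) u → v ∈ T (k + 1) :=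
    fun u v huv hu hpos => by
      rw [hmemT] at hu ⊢
      push_cast
      linarith [hstab u v huv hpos]
  have hweighted : ∑ u ∈ T k, ω u * ℓ u =
      ∑ u ∈ T k, ∑ e ∈ G.edgeFinset.filter (fun e => u ∈ e), f e u :=
    sum_congr rfl fun u _ => by
      rw [hℓ u, ← mul_assoc, mul_one_div_cancel (by linarith [hω u]), one_mul]
  have hload : ∑ u ∈ T k, ω u * ℓ u ≤
      ((G.edgeFinset.filter (fun e => e ∈ (T (k + 1)).sym2)).card : ℝ) :=
    hweighted ▸ sum_sum_incident_le_card_edges_within hf_nonneg hf_sum hmono hclosed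
  refine ⟨hload, le_trans ?_ hload⟩
  rw [sum_mul]
  exact sum_le_sum fun v hv =>
    mul_le_mul_of_nonneg_left ((hmemT k v).mp hv) (by linarith [hω v])

/-- Weighted level-set bound: for an η-locally-stable weighted
fractional edge-load assignment with maximum load `ρ̂` and level sets
`T_i = {v : ℓ_v ≥ ρ̂ − η·i}`, for every `k ≥ 0` we have
`Σ_{u∈T_k} ω(u)·ℓ_u ≤ |E(T_{k+1})|`; in particular `|E(T_{k+1})| ≥ ω(T_k)·(ρ̂ − η·k)`. -/
theorem weighted_level_set_load_bound
    {V : Type*} [Fintype V] [DecidableEq V]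
    (G : SimpleGraph V) [DecidableRel G.Adj]
    (ω : V → ℝ) (hω : ∀ v : V, 1 ≤ ω v)
    (η : ℝ) (hη : 0 ≤ η)
    (f : Sym2 V → V → ℝ)
    (hf_nonneg : ∀ u v : V, G.Adj u v → 0 ≤ f s(u, v) u)
    (hf_sum : ∀ u v : V, G.Adj u v → f s(u, v) u + f s(u, v) v = 1)
    (ℓ : V → ℝ)
    (hℓ : ∀ v : V, ℓ v = (1 / ω v) * ∑ e ∈ G.edgeFinset.filter (fun e => v ∈ e), f e v)
    (hstab : ∀ u v : V, G.Adj u v → 0 < f s(u, v) u → ℓ u ≤ ℓ v + η)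
    (ρhat : ℝ)
    (hρhat_ub : ∀ v : V, ℓ v ≤ ρhat)
    (hρhat_mem : ∃ v : V, ℓ v = ρhat)
    (T : ℕ → Finset V)
    (hT : ∀ i : ℕ, T i = Finset.univ.filter (fun v => ρhat - η * i ≤ ℓ v)) :
    ∀ k : ℕ,
      (∑ u ∈ T k, ω u * ℓ u ≤
        ((G.edgeFinset.filter (fun e => e ∈ (T (k + 1)).sym2)).card : ℝ)) ∧
      ((∑ v ∈ T k, ω v) * (ρhat - η * k) ≤
        ((G.edgeFinset.filter (fun e => e ∈ (T (k + 1)).sym2)).card : ℝ)) :=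
  weighted_level_set_load_bound_general G ω hω η hη f hf_nonneg hf_sum ℓ hℓ hstab ρhat T hT
end

section
/- Let G = (V,E) be a finite directed graph with at least one edge, and let S, T ⊆ V be nonempty subsets achieving the maximum directed subgraph density, i.e., ρ_G(S,T) = ρ*_G. Set t = √(|S|/|T|). Then ρ*_{G_t} = ρ*_G; that is, 2·|E(S,T)|/(|S|/t + t·|T|) = ρ*_G, and for all subsets A, B ⊆ V, 2·|E(A,B)| ≤ ρ*_G·(|A|/t + t·|B|). -/
open Finset

/-- If `S, T` are nonempty subsets achieving the maximum directed
subgraph density `ρ*_G` and `t = √(|S|/|T|)`, then `ρ*_{G_t} = ρ*_G`: the pair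
`(S,T)` witnesses `2·|E(S,T)|/(|S|/t + t·|T|) = ρ*_G`, and every pair `(A,B)`
satisfies `2·|E(A,B)| ≤ ρ*_G·(|A|/t + t·|B|)`. -/
theorem directed_density_exact
    {V : Type*} [Fintype V] [DecidableEq V]
    (E : Finset (V × V)) (hE : E.Nonempty)
    (ρstar : ℝ)
    (hρstar_ub : ∀ A B : Finset V, A.Nonempty → B.Nonempty →
      ((E.filter (fun p => p.1 ∈ A ∧ p.2 ∈ B)).card : ℝ) /
        Real.sqrt ((A.card : ℝ) * (B.card : ℝ)) ≤ ρstar)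
    (S T : Finset V) (hS : S.Nonempty) (hT : T.Nonempty)
    (hach : ((E.filter (fun p => p.1 ∈ S ∧ p.2 ∈ T)).card : ℝ) /
      Real.sqrt ((S.card : ℝ) * (T.card : ℝ)) = ρstar)
    (t : ℝ) (ht : t = Real.sqrt ((S.card : ℝ) / (T.card : ℝ))) :
    2 * ((E.filter (fun p => p.1 ∈ S ∧ p.2 ∈ T)).card : ℝ) /
      ((S.card : ℝ) / t + t * (T.card : ℝ)) = ρstar ∧
    (∀ A B : Finset V,
      2 * ((E.filter (fun p => p.1 ∈ A ∧ p.2 ∈ B)).card : ℝ) ≤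
        ρstar * ((A.card : ℝ) / t + t * (B.card : ℝ))) := by
  have hS0 : (0:ℝ) < S.card := by exact_mod_cast hS.card_pos
  have hT0 : (0:ℝ) < T.card := by exact_mod_cast hT.card_pos
  have ht0 : 0 < t := by
    rw [ht]; exact Real.sqrt_pos.mpr (div_pos hS0 hT0)
  have hρ0 : 0 ≤ ρstar := by
    rw [← hach]
    exact div_nonneg (by positivity) (Real.sqrt_nonneg _)
  set a := Real.sqrt (S.card : ℝ) with ha
  set b := Real.sqrt (T.card : ℝ) with hb
  have ha2 : a ^ 2 = (S.card : ℝ) := Real.sq_sqrt hS0.le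
  have hb2 : b ^ 2 = (T.card : ℝ) := Real.sq_sqrt hT0.le
  have ha0 : 0 < a := Real.sqrt_pos.mpr hS0
  have hb0 : 0 < b := Real.sqrt_pos.mpr hT0
  have htab : t = a / b := by
    rw [ht, ha, hb, Real.sqrt_div hS0.le]
  have hsum : (S.card : ℝ) / t + t * (T.card : ℝ)
      = 2 * Real.sqrt ((S.card : ℝ) * (T.card : ℝ)) := by
    rw [Real.sqrt_mul hS0.le, ← ha, ← hb, ← ha2, ← hb2, htab]
    field_simp
    ring
  -- AM-GM style inequality
  have amgm : ∀ A B : Finset V, A.Nonempty → B.Nonempty →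
      2 * Real.sqrt ((A.card : ℝ) * (B.card : ℝ))
        ≤ (A.card : ℝ) / t + t * (B.card : ℝ) := by
    intro A B hA hB
    have hA0 : (0:ℝ) < A.card := by exact_mod_cast hA.card_pos
    have hB0 : (0:ℝ) < B.card := by exact_mod_cast hB.card_pos
    set x := Real.sqrt (A.card : ℝ) with hx
    set y := Real.sqrt (B.card : ℝ) with hy
    have hx2 : x ^ 2 = (A.card : ℝ) := Real.sq_sqrt hA0.le
    have hy2 : y ^ 2 = (B.card : ℝ) := Real.sq_sqrt hB0.le
    have hx0 : 0 ≤ x := Real.sqrt_nonneg _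
    have hy0 : 0 ≤ y := Real.sqrt_nonneg _
    rw [Real.sqrt_mul hA0.le, ← hx, ← hy, ← hx2, ← hy2]
    rw [div_add' _ _ _ ht0.ne', le_div_iff₀ ht0]
    nlinarith [sq_nonneg (x - t * y), ht0]
  constructor
  · rw [hsum, mul_div_mul_left _ _ (two_ne_zero), hach]
  · intro A B
    rcases A.eq_empty_or_nonempty with rfl | hA
    · simp only [notMem_empty, false_and, filter_false, card_empty, Nat.cast_zero, mul_zero,
        card_empty]
      have : (0:ℝ) ≤ ρstar * ((0:ℝ) / t + t * (B.card : ℝ)) := by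
        apply mul_nonneg hρ0
        exact add_nonneg (div_nonneg le_rfl ht0.le) (mul_nonneg ht0.le (by positivity))
      simpa using this
    rcases B.eq_empty_or_nonempty with rfl | hB
    · simp only [notMem_empty, and_false, filter_false, card_empty, Nat.cast_zero, mul_zero]
      have : (0:ℝ) ≤ ρstar * ((A.card : ℝ) / t + t * (0:ℝ)) := by
        apply mul_nonneg hρ0
        exact add_nonneg (div_nonneg (by positivity) ht0.le) (by simp)
      simpa using this
    have h1 := hρstar_ub A B hA hB
    have hA0 : (0:ℝ) < A.card := by exact_mod_cast hA.card_pos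
    have hB0 : (0:ℝ) < B.card := by exact_mod_cast hB.card_pos
    have hsq0 : 0 < Real.sqrt ((A.card : ℝ) * (B.card : ℝ)) :=
      Real.sqrt_pos.mpr (by positivity)
    have h2 : ((E.filter (fun p => p.1 ∈ A ∧ p.2 ∈ B)).card : ℝ)
        ≤ ρstar * Real.sqrt ((A.card : ℝ) * (B.card : ℝ)) :=
      (div_le_iff₀ hsq0).mp h1
    have h3 := amgm A B hA hB
    calc 2 * ((E.filter (fun p => p.1 ∈ A ∧ p.2 ∈ B)).card : ℝ)
        ≤ 2 * (ρstar * Real.sqrt ((A.card : ℝ) * (B.card : ℝ))) := by linarith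
      _ = ρstar * (2 * Real.sqrt ((A.card : ℝ) * (B.card : ℝ))) := by ring
      _ ≤ ρstar * ((A.card : ℝ) / t + t * (B.card : ℝ)) :=
          mul_le_mul_of_nonneg_left h3 hρ0
end

section
/- Let G = (V,E) be a finite directed graph with at least one edge, let 0 < ε < 1, and let S, T ⊆ V be nonempty subsets achieving the maximum directed subgraph density, i.e., ρ_G(S,T) = ρ*_G. Let t > 0 satisfy √(|S|/|T|)·(1−ε) ≤ t ≤ √(|S|/|T|)/(1−ε). Then ρ*_{G_t} ≥ (1−ε)·ρ*_G; in particular, 2·|E(S,T)|/(|S|/t + t·|T|) ≥ (1−ε)·ρ*_G. -/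
open Finset

/-- If `S, T` achieve the maximum directed subgraph density `ρ*_G`,
`0 < ε < 1`, and `t` satisfies `√(|S|/|T|)·(1−ε) ≤ t ≤ √(|S|/|T|)/(1−ε)`, then
`ρ*_{G_t} ≥ (1−ε)·ρ*_G`; in particular `2·|E(S,T)|/(|S|/t + t·|T|) ≥ (1−ε)·ρ*_G`. -/
theorem directed_density_approx
    {V : Type*} [Fintype V] [DecidableEq V]
    (E : Finset (V × V)) (hE : E.Nonempty)
    (ε : ℝ) (hε0 : 0 < ε) (hε1 : ε < 1)
    (ρstar : ℝ)
    (hρstar_ub : ∀ A B : Finset V, A.Nonempty → B.Nonempty →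
      ((E.filter (fun p => p.1 ∈ A ∧ p.2 ∈ B)).card : ℝ) /
        Real.sqrt ((A.card : ℝ) * (B.card : ℝ)) ≤ ρstar)
    (S T : Finset V) (hS : S.Nonempty) (hT : T.Nonempty)
    (hach : ((E.filter (fun p => p.1 ∈ S ∧ p.2 ∈ T)).card : ℝ) /
      Real.sqrt ((S.card : ℝ) * (T.card : ℝ)) = ρstar)
    (t : ℝ) (ht : 0 < t)
    (ht_lb : Real.sqrt ((S.card : ℝ) / (T.card : ℝ)) * (1 - ε) ≤ t)
    (ht_ub : t ≤ Real.sqrt ((S.card : ℝ) / (T.card : ℝ)) / (1 - ε))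
    (ρGt : ℝ)
    (hρGt_ub : ∀ A B : Finset V, (A.Nonempty ∨ B.Nonempty) →
      2 * ((E.filter (fun p => p.1 ∈ A ∧ p.2 ∈ B)).card : ℝ) /
        ((A.card : ℝ) / t + t * (B.card : ℝ)) ≤ ρGt)
    (hρGt_mem : ∃ A B : Finset V, (A.Nonempty ∨ B.Nonempty) ∧
      2 * ((E.filter (fun p => p.1 ∈ A ∧ p.2 ∈ B)).card : ℝ) /
        ((A.card : ℝ) / t + t * (B.card : ℝ)) = ρGt) :
    (1 - ε) * ρstar ≤ ρGt ∧
      (1 - ε) * ρstar ≤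
        2 * ((E.filter (fun p => p.1 ∈ S ∧ p.2 ∈ T)).card : ℝ) /
          ((S.card : ℝ) / t + t * (T.card : ℝ)) := by

  set e : ℝ := ((E.filter (fun p => p.1 ∈ S ∧ p.2 ∈ T)).card : ℝ) with he
  have he0 : 0 ≤ e := by positivity
  have hs : (0:ℝ) < (S.card : ℝ) := by exact_mod_cast hS.card_pos
  have hτ : (0:ℝ) < (T.card : ℝ) := by exact_mod_cast hT.card_pos
  set s : ℝ := (S.card : ℝ) with hs'
  set τ : ℝ := (T.card : ℝ) with hτ'
  have hεm : 0 < 1 - ε := by linarith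
  set a : ℝ := Real.sqrt s with ha
  set b : ℝ := Real.sqrt τ with hb
  have ha0 : 0 < a := Real.sqrt_pos.2 hs
  have hb0 : 0 < b := Real.sqrt_pos.2 hτ
  have ha2 : a ^ 2 = s := Real.sq_sqrt hs.le
  have hb2 : b ^ 2 = τ := Real.sq_sqrt hτ.le
  have hdiv : Real.sqrt (s / τ) = a / b := Real.sqrt_div hs.le τ
  have hmul : Real.sqrt (s * τ) = a * b := Real.sqrt_mul hs.le τ
  rw [hdiv] at ht_lb ht_ub
  -- key inequality
  have hden : 0 < s / t + t * τ := by positivity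
  have hlb : a * (1 - ε) ≤ t * b := by
    rw [div_mul_eq_mul_div] at ht_lb
    exact (div_le_iff₀ hb0).1 ht_lb
  have hub : t * b * (1 - ε) ≤ a := by
    rw [div_div] at ht_ub
    have := (le_div_iff₀ (by positivity)).1 ht_ub
    linarith [this]
  have key : (1 - ε) * (s / t + t * τ) ≤ 2 * (a * b) := by
    rw [div_add' _ _ _ ht.ne', ← mul_div_assoc, div_le_iff₀ ht, ← ha2, ← hb2]
    nlinarith [mul_nonneg (sub_nonneg.2 hlb) (sub_nonneg.2 hub), sq_nonneg ε,
      mul_pos ht hb0, mul_pos ha0 (mul_pos ht hb0), sq_nonneg (1-ε)]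
  have goal2 : (1 - ε) * ρstar ≤ 2 * e / (s / t + t * τ) := by
    rw [← hach, hmul, le_div_iff₀ hden]
    calc (1 - ε) * (e / (a * b)) * (s / t + t * τ)
        = e / (a * b) * ((1 - ε) * (s / t + t * τ)) := by ring
      _ ≤ e / (a * b) * (2 * (a * b)) := mul_le_mul_of_nonneg_left key (by positivity)
      _ = 2 * e := by field_simp
  exact ⟨le_trans goal2 (hρGt_ub S T (Or.inl hS)), goal2⟩
end

section
/- Let G = (V,E) be a finite directed graph on n = |V| ≥ 1 vertices with at least one edge, and let 0 < ε < 1. Then there exists a nonnegative integer i with (1−ε/2)^{−i}/√n ≤ √n (i.e., i ≤ log_{1/(1−ε/2)} n) such that, setting t = (1−ε/2)^{−i}/√n, one has ρ*_{G_t} ≥ (1−ε)·ρ*_G. -/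
/-!
Take a pair `S, T` attaining `ρ*_G` and write `t = r·√(|S|/|T|)`. Then
`2|E(S,T)|/(|S|/t + t|T|) = ρ_G(S,T) · 2r/(1 + r²)`, and `2r/(1 + r²) ≥ 1 − ε` as soon as
`1 − ε/2 < r ≤ 1`. Since `1 ≤ √|S|·√n/√|T|`, some power of `(1 − ε/2)⁻¹` falls in
`((1 − ε/2)·√|S|·√n/√|T|, √|S|·√n/√|T|]`, and dividing it by `√n` gives such a `t`.
-/

open Finset

/-- `ρ*_{G_t}`: the maximum, over pairs of subsets `S, T ⊆ V` not both empty, of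
`2·|E(S,T)|/(|S|/t + t·|T|)` (the maximum vertex-weighted subgraph density of the
bipartite graph `G_t`). -/
noncomputable def rhoGt {V : Type*} [Fintype V] [DecidableEq V]
    (E : Finset (V × V)) (t : ℝ) : ℝ :=
  sSup { x : ℝ | ∃ S T : Finset V, (S.Nonempty ∨ T.Nonempty) ∧
    x = 2 * ((E.filter (fun p => p.1 ∈ S ∧ p.2 ∈ T)).card : ℝ) /
      ((S.card : ℝ) / t + t * (T.card : ℝ)) }

lemma exists_mul_lt_inv_pow_div_le {p c x : ℝ} (hp0 : 0 < p) (hp1 : p < 1) (hc : 0 < c)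
    (hxc : 1 ≤ x * c) : ∃ i : ℕ, p * x < p⁻¹ ^ i / c ∧ p⁻¹ ^ i / c ≤ x := by
  obtain ⟨i, hle, hlt⟩ := exists_nat_pow_near hxc ((one_lt_inv₀ hp0).2 hp1)
  refine ⟨i, ?_, (div_le_iff₀ hc).2 hle⟩
  rw [lt_div_iff₀ hc, mul_assoc]
  calc p * (x * c) < p * p⁻¹ ^ (i + 1) := by gcongr
    _ = p⁻¹ ^ i := by rw [pow_succ, mul_left_comm, mul_inv_cancel₀ hp0.ne', mul_one]

lemma one_sub_le_two_mul_div_one_add_sq {ε r : ℝ} (hr0 : 0 ≤ r) (hr : 1 - ε / 2 < r)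
    (hr1 : r ≤ 1) : 1 - ε ≤ 2 * r / (1 + r ^ 2) := by
  rw [le_div_iff₀ (by positivity)]
  nlinarith [mul_nonneg (sub_nonneg.2 hr1) (sub_nonneg.2 (by linarith : 1 - r ≤ ε / 2)),
    mul_nonneg (by linarith : (0 : ℝ) ≤ ε) (sq_nonneg r)]

lemma two_mul_div_sq_div_add_mul_sq {u v t : ℝ} (N : ℝ) (hu : 0 < u) (hv : 0 < v)
    (ht : 0 < t) :
    2 * N / (u ^ 2 / t + t * v ^ 2) = N / (u * v) * (2 * (t * v / u) / (1 + (t * v / u) ^ 2)) := by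
  field_simp

lemma min_le_div_add_mul {t : ℝ} (ht : 0 < t) {a b : ℕ} (hab : a ≠ 0 ∨ b ≠ 0) :
    min t t⁻¹ ≤ a / t + t * b := by
  rcases hab with ha | hb
  · calc min t t⁻¹ ≤ 1 / t := by rw [one_div]; exact min_le_right _ _
      _ ≤ a / t := by gcongr; exact_mod_cast Nat.one_le_iff_ne_zero.2 ha
      _ ≤ a / t + t * b := le_add_of_nonneg_right (by positivity)
  · calc min t t⁻¹ ≤ t * 1 := by rw [mul_one]; exact min_le_left _ _
      _ ≤ t * b := by gcongr; exact_mod_cast Nat.one_le_iff_ne_zero.2 hb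
      _ ≤ a / t + t * b := le_add_of_nonneg_left (by positivity)

section Graph

variable {V : Type*} [Fintype V] [DecidableEq V] (E : Finset (V × V))

lemma le_rhoGt {t : ℝ} (ht : 0 < t) {S T : Finset V} (hST : S.Nonempty ∨ T.Nonempty) :
    2 * ((E.filter (fun p => p.1 ∈ S ∧ p.2 ∈ T)).card : ℝ) /
      ((S.card : ℝ) / t + t * (T.card : ℝ)) ≤ rhoGt E t := by
  refine le_csSup ⟨2 * E.card / min t t⁻¹, ?_⟩ ⟨S, T, hST, rfl⟩
  rintro _ ⟨S', T', hST', rfl⟩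
  have hcard : ((E.filter (fun p => p.1 ∈ S' ∧ p.2 ∈ T')).card : ℝ) ≤ E.card :=
    Nat.cast_le.2 (card_filter_le E _)
  have hden := min_le_div_add_mul ht
    (hST'.imp (fun h => (card_pos.2 h).ne') (fun h => (card_pos.2 h).ne'))
  exact div_le_div₀ (by positivity) (by gcongr) (lt_min ht (inv_pos.2 ht)) hden

lemma one_sub_mul_density_le_rhoGt {ε t : ℝ} {S T : Finset V} (hS : S.Nonempty)
    (hT : T.Nonempty) (ht0 : 0 < t)
    (hlo : (1 - ε / 2) * (√(S.card : ℝ) / √(T.card : ℝ)) < t)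
    (hhi : t ≤ √(S.card : ℝ) / √(T.card : ℝ)) :
    (1 - ε) * (((E.filter (fun p => p.1 ∈ S ∧ p.2 ∈ T)).card : ℝ) /
      √((S.card : ℝ) * (T.card : ℝ))) ≤ rhoGt E t := by
  set N := ((E.filter (fun p => p.1 ∈ S ∧ p.2 ∈ T)).card : ℝ)
  set u := √(S.card : ℝ)
  set v := √(T.card : ℝ)
  have hu : 0 < u := Real.sqrt_pos.2 (by exact_mod_cast hS.card_pos)
  have hv : 0 < v := Real.sqrt_pos.2 (by exact_mod_cast hT.card_pos)
  have hr : 1 - ε / 2 < t * v / u := by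
    rw [lt_div_iff₀ hu]
    rwa [mul_div_assoc', div_lt_iff₀ hv] at hlo
  have hr1 : t * v / u ≤ 1 := by
    rw [div_le_one hu]
    rwa [le_div_iff₀ hv] at hhi
  calc (1 - ε) * (N / √((S.card : ℝ) * T.card))
      = (1 - ε) * (N / (u * v)) := by rw [Real.sqrt_mul (Nat.cast_nonneg _)]
    _ ≤ N / (u * v) * (2 * (t * v / u) / (1 + (t * v / u) ^ 2)) := by
        rw [mul_comm]
        gcongr
        exact one_sub_le_two_mul_div_one_add_sq (by positivity) hr hr1
    _ = 2 * N / ((S.card : ℝ) / t + t * T.card) := by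
        rw [← two_mul_div_sq_div_add_mul_sq N hu hv ht0, Real.sq_sqrt (Nat.cast_nonneg _),
          Real.sq_sqrt (Nat.cast_nonneg _)]
    _ ≤ rhoGt E t := le_rhoGt E ht0 (Or.inl hS)

end Graph

theorem directed_density_grid_search_general
    {V : Type*} [Fintype V] [DecidableEq V]
    (E : Finset (V × V))
    (ε : ℝ) (hε0 : 0 < ε) (hε1 : ε < 1)
    (ρstar : ℝ)
    (hρstar_mem : ∃ S T : Finset V, S.Nonempty ∧ T.Nonempty ∧
      ((E.filter (fun p => p.1 ∈ S ∧ p.2 ∈ T)).card : ℝ) /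
        Real.sqrt ((S.card : ℝ) * (T.card : ℝ)) = ρstar) :
    ∃ i : ℕ,
      (1 - ε / 2)⁻¹ ^ i / Real.sqrt (Fintype.card V) ≤ Real.sqrt (Fintype.card V) ∧
      (1 - ε) * ρstar ≤
        rhoGt E ((1 - ε / 2)⁻¹ ^ i / Real.sqrt (Fintype.card V)) := by
  obtain ⟨S, T, hS, hT, rfl⟩ := hρstar_mem
  have hS1 : 1 ≤ √(S.card : ℝ) := Real.one_le_sqrt.2 (by exact_mod_cast hS.card_pos)
  have hT1 : 1 ≤ √(T.card : ℝ) := Real.one_le_sqrt.2 (by exact_mod_cast hT.card_pos)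
  have hSn : √(S.card : ℝ) ≤ √(Fintype.card V) :=
    Real.sqrt_le_sqrt (by exact_mod_cast S.card_le_univ)
  have hTn : √(T.card : ℝ) ≤ √(Fintype.card V) :=
    Real.sqrt_le_sqrt (by exact_mod_cast T.card_le_univ)
  have hn : 0 < √(Fintype.card V : ℝ) := one_pos.trans_le (hS1.trans hSn)
  have hx : √(S.card : ℝ) / √(T.card : ℝ) ≤ √(Fintype.card V) :=
    (div_le_self (by positivity) hT1).trans hSn
  have hxn : 1 ≤ √(S.card : ℝ) / √(T.card : ℝ) * √(Fintype.card V) := by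
    rw [div_mul_eq_mul_div, one_le_div (by positivity)]
    exact hTn.trans (le_mul_of_one_le_left hn.le hS1)
  obtain ⟨i, hlo, hhi⟩ :=
    exists_mul_lt_inv_pow_div_le (by linarith : 0 < 1 - ε / 2) (by linarith) (by positivity) hxn
  have hp : 0 < (1 - ε / 2)⁻¹ := inv_pos.2 (by linarith)
  exact ⟨i, hhi.trans hx,
    one_sub_mul_density_le_rhoGt E hS hT (by positivity) hlo hhi⟩

/-- For a finite directed graph on `n ≥ 1` vertices with at least
one edge and `0 < ε < 1`, there is a nonnegative integer `i` with
`(1−ε/2)^{−i}/√n ≤ √n` such that, for `t = (1−ε/2)^{−i}/√n`,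
`ρ*_{G_t} ≥ (1−ε)·ρ*_G`. -/
theorem directed_density_grid_search
    {V : Type*} [Fintype V] [DecidableEq V]
    (hn : 1 ≤ Fintype.card V)
    (E : Finset (V × V)) (hE : E.Nonempty)
    (ε : ℝ) (hε0 : 0 < ε) (hε1 : ε < 1)
    (ρstar : ℝ)
    (hρstar_ub : ∀ S T : Finset V, S.Nonempty → T.Nonempty →
      ((E.filter (fun p => p.1 ∈ S ∧ p.2 ∈ T)).card : ℝ) /
        Real.sqrt ((S.card : ℝ) * (T.card : ℝ)) ≤ ρstar)
    (hρstar_mem : ∃ S T : Finset V, S.Nonempty ∧ T.Nonempty ∧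
      ((E.filter (fun p => p.1 ∈ S ∧ p.2 ∈ T)).card : ℝ) /
        Real.sqrt ((S.card : ℝ) * (T.card : ℝ)) = ρstar) :
    ∃ i : ℕ,
      (1 - ε / 2)⁻¹ ^ i / Real.sqrt (Fintype.card V) ≤ Real.sqrt (Fintype.card V) ∧
      (1 - ε) * ρstar ≤
        rhoGt E ((1 - ε / 2)⁻¹ ^ i / Real.sqrt (Fintype.card V)) :=
  directed_density_grid_search_general E ε hε0 hε1 ρstar hρstar_mem
end
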